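/- arXiv:math/0510054 — 5 statements merged into one kernel-verified Lean document; each statement's English description precedes it below -/
import Mathlib

section
/- For all complex numbers q, z with 0 < |q| < 1 and |z| < 1/|q|, one has 1 − ∑_{m=1}^∞ z^{m+1} q^m ∏_{j=1}^{m−1} (1 − z q^j) = 1 + ∑_{n=1}^∞ (−1)^n ( z^{3n−1} q^{n(3n−1)/2} + z^{3n} q^{n(3n+1)/2} ), both series converging absolutely (Andrews' two-variable generalization of Euler's pentagonal number theorem). -/
open Finset Filter Topology

namespace AndrewsPentAux

/-- The m-th term of the left-hand series, as a function of `w`. -/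
noncomputable def T (q w : ℂ) (m : ℕ) : ℂ :=
  w ^ (m + 2) * q ^ (m + 1) * ∏ j ∈ Finset.range m, (1 - w * q ^ (j + 1))

/-- Product bound: any partial product `∏ (1 - w q^{j+s})` with `s ≥ 1` is bounded
by `exp(‖w‖‖q‖/(1-‖q‖))`. -/
lemma prod_bound (q w : ℂ) (hq0 : 0 < ‖q‖) (hq : ‖q‖ < 1) (s m : ℕ) (hs : 1 ≤ s) :
    ‖∏ j ∈ Finset.range m, (1 - w * q ^ (j + s))‖ ≤
      Real.exp (‖w‖ * ‖q‖ / (1 - ‖q‖)) := by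
  have hden : (0:ℝ) < 1 - ‖q‖ := by linarith
  calc ‖∏ j ∈ Finset.range m, (1 - w * q ^ (j + s))‖
      ≤ ∏ j ∈ Finset.range m, ‖(1 : ℂ) - w * q ^ (j + s)‖ := norm_prod_le _ _
    _ ≤ ∏ j ∈ Finset.range m, Real.exp (‖w‖ * ‖q‖ ^ (j + 1)) := by
        apply Finset.prod_le_prod (fun j _ => norm_nonneg _)
        intro j _
        have h1 : ‖(1:ℂ) - w * q ^ (j+s)‖ ≤ 1 + ‖w‖ * ‖q‖^(j+s) := by
          calc ‖(1:ℂ) - w * q ^ (j+s)‖ ≤ ‖(1:ℂ)‖ + ‖w * q^(j+s)‖ := norm_sub_le _ _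
          _ = 1 + ‖w‖ * ‖q‖^(j+s) := by simp
        have h2 : ‖w‖ * ‖q‖^(j+s) ≤ ‖w‖ * ‖q‖^(j+1) :=
          mul_le_mul_of_nonneg_left
            (pow_le_pow_of_le_one hq0.le hq.le (by omega)) (norm_nonneg w)
        have h3 := Real.add_one_le_exp (‖w‖ * ‖q‖^(j+1))
        linarith
    _ = Real.exp (∑ j ∈ Finset.range m, ‖w‖ * ‖q‖^(j+1)) := (Real.exp_sum _ _).symm
    _ ≤ Real.exp (‖w‖ * ‖q‖ / (1 - ‖q‖)) := by
        apply Real.exp_le_exp.mpr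
        have hsum : ∑ j ∈ Finset.range m, ‖w‖ * ‖q‖^(j+1)
            = (‖w‖ * ‖q‖) * ∑ j ∈ Finset.range m, ‖q‖^j := by
          rw [Finset.mul_sum]
          exact Finset.sum_congr rfl (fun j _ => by ring)
        have hg : ∑ j ∈ Finset.range m, ‖q‖ ^ j ≤ (1 - ‖q‖)⁻¹ := by
          have hsg := summable_geometric_of_lt_one (norm_nonneg q) hq
          calc ∑ j ∈ Finset.range m, ‖q‖ ^ j ≤ ∑' j : ℕ, ‖q‖ ^ j :=
                Summable.sum_le_tsum _ (fun i _ => by positivity) hsg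
          _ = (1 - ‖q‖)⁻¹ := tsum_geometric_of_lt_one (norm_nonneg q) hq
        rw [hsum, div_eq_mul_inv]
        exact mul_le_mul_of_nonneg_left hg (by positivity)

/-- Generic summability of series of the shape appearing in the proof. -/
lemma summable_aux_norm (q : ℂ) (hq0 : 0 < ‖q‖) (hq : ‖q‖ < 1) (w : ℂ)
    (hw : ‖w‖ * ‖q‖ < 1) (a bb s : ℕ) (hs : 1 ≤ s) :
    Summable (fun m : ℕ => ‖w^(m+a) * q^(m+bb) * ∏ j ∈ Finset.range m, (1 - w*q^(j+s))‖) := by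
  apply Summable.of_nonneg_of_le (fun m => norm_nonneg _) ?_
    (((summable_geometric_of_lt_one (by positivity) hw).mul_left
      (‖w‖^a * ‖q‖^bb * Real.exp (‖w‖*‖q‖/(1-‖q‖)))))
  intro m
  calc ‖w^(m+a) * q^(m+bb) * ∏ j ∈ Finset.range m, (1 - w*q^(j+s))‖
      = ‖w‖^(m+a) * ‖q‖^(m+bb) * ‖∏ j ∈ Finset.range m, (1 - w*q^(j+s))‖ := by
        simp [norm_mul, norm_pow]
    _ ≤ ‖w‖^(m+a) * ‖q‖^(m+bb) * Real.exp (‖w‖*‖q‖/(1-‖q‖)) := by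
        gcongr
        exact prod_bound q w hq0 hq s m hs
    _ = ‖w‖^a * ‖q‖^bb * Real.exp (‖w‖*‖q‖/(1-‖q‖)) * (‖w‖*‖q‖)^m := by ring

lemma summable_aux (q : ℂ) (hq0 : 0 < ‖q‖) (hq : ‖q‖ < 1) (w : ℂ)
    (hw : ‖w‖ * ‖q‖ < 1) (a bb s : ℕ) (hs : 1 ≤ s) :
    Summable (fun m : ℕ => w^(m+a) * q^(m+bb) * ∏ j ∈ Finset.range m, (1 - w*q^(j+s))) :=
  (summable_aux_norm q hq0 hq w hw a bb s hs).of_norm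

lemma summable_T (q : ℂ) (hq0 : 0 < ‖q‖) (hq : ‖q‖ < 1) (w : ℂ)
    (hw : ‖w‖ * ‖q‖ < 1) : Summable (fun m => T q w m) := by
  have := summable_aux q hq0 hq w hw 2 1 1 le_rfl
  simpa [T] using this

/-- The functional equation of Euler/Andrews. -/
lemma FE (q : ℂ) (hq0 : 0 < ‖q‖) (hq : ‖q‖ < 1) (w : ℂ) (hw : ‖w‖ * ‖q‖ < 1) :
    ∑' m, T q w m = w^2*q + w^3*q^2 - w^3*q^2 * ∑' m, T q (w*q) m := by
  have hwq : ‖w*q‖ * ‖q‖ < 1 := by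
    rw [norm_mul]
    calc ‖w‖ * ‖q‖ * ‖q‖ ≤ ‖w‖ * ‖q‖ * 1 := by
          apply mul_le_mul_of_nonneg_left hq.le (by positivity)
    _ = ‖w‖ * ‖q‖ := by ring
    _ < 1 := hw
  have hsT : Summable (fun m => T q w m) := summable_T q hq0 hq w hw
  have hsT' : Summable (fun m => T q (w*q) m) := summable_T q hq0 hq (w*q) hwq
  have hsU : Summable (fun m : ℕ => w^(m+3) * q^(m+2) * ∏ j ∈ Finset.range m, (1 - w*q^(j+2))) :=
    summable_aux q hq0 hq w hw 3 2 2 (by norm_num)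
  have hsV : Summable (fun m : ℕ => w^(m+4) * q^(m+3) * ∏ j ∈ Finset.range m, (1 - w*q^(j+2))) :=
    summable_aux q hq0 hq w hw 4 3 2 (by norm_num)
  have hsU' : Summable (fun m : ℕ => w^(m+1+3) * q^(m+1+2) * ∏ j ∈ Finset.range (m+1), (1 - w*q^(j+2))) :=
    (summable_nat_add_iff (f := fun m : ℕ => w^(m+3) * q^(m+2) * ∏ j ∈ Finset.range m, (1 - w*q^(j+2))) 1).mpr hsU
  have hsplit : ∀ m : ℕ, T q w (m+1) =
      w^(m+3) * q^(m+2) * ∏ j ∈ Finset.range m, (1 - w*q^(j+2))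
      - w^(m+4) * q^(m+3) * ∏ j ∈ Finset.range m, (1 - w*q^(j+2)) := by
    intro m
    simp only [T]
    rw [Finset.prod_range_succ' (fun j => 1 - w*q^(j+1)) m]
    have h2 : (∏ j ∈ Finset.range m, (1 - w*q^(j+1+1)))
        = ∏ j ∈ Finset.range m, (1 - w*q^(j+2)) :=
      Finset.prod_congr rfl (fun j _ => by norm_num)
    rw [h2]
    ring
  have hkey : ∀ m : ℕ, w^3*q^2 * T q (w*q) m =
      w^(m+4) * q^(m+3) * ∏ j ∈ Finset.range m, (1 - w*q^(j+2))
      - w^(m+1+3) * q^(m+1+2) * ∏ j ∈ Finset.range (m+1), (1 - w*q^(j+2)) := by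
    intro m
    simp only [T]
    rw [Finset.prod_range_succ (fun j => 1 - w*q^(j+2)) m]
    have h2 : (∏ j ∈ Finset.range m, (1 - (w*q)*q^(j+1)))
        = ∏ j ∈ Finset.range m, (1 - w*q^(j+2)) :=
      Finset.prod_congr rfl (fun j _ => by ring_nf)
    rw [h2]
    ring
  calc ∑' m, T q w m = T q w 0 + ∑' m, T q w (m+1) := Summable.tsum_eq_zero_add hsT
    _ = w^2*q + ∑' m : ℕ, (w^(m+3) * q^(m+2) * ∏ j ∈ Finset.range m, (1 - w*q^(j+2))
            - w^(m+4) * q^(m+3) * ∏ j ∈ Finset.range m, (1 - w*q^(j+2))) := by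
        rw [tsum_congr hsplit]
        congr 1
        simp [T]
    _ = w^2*q + ((∑' m : ℕ, w^(m+3) * q^(m+2) * ∏ j ∈ Finset.range m, (1 - w*q^(j+2)))
          - ∑' m : ℕ, w^(m+4) * q^(m+3) * ∏ j ∈ Finset.range m, (1 - w*q^(j+2))) := by
        rw [Summable.tsum_sub hsU hsV]
    _ = w^2*q + ((w^3*q^2 + ∑' m : ℕ, w^(m+1+3) * q^(m+1+2) * ∏ j ∈ Finset.range (m+1), (1 - w*q^(j+2)))
          - ∑' m : ℕ, w^(m+4) * q^(m+3) * ∏ j ∈ Finset.range m, (1 - w*q^(j+2))) := by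
        rw [Summable.tsum_eq_zero_add hsU]
        norm_num
    _ = w^2*q + w^3*q^2 - ∑' m : ℕ,
          (w^(m+4) * q^(m+3) * ∏ j ∈ Finset.range m, (1 - w*q^(j+2))
            - w^(m+1+3) * q^(m+1+2) * ∏ j ∈ Finset.range (m+1), (1 - w*q^(j+2))) := by
        rw [Summable.tsum_sub hsV hsU']
        ring
    _ = w^2*q + w^3*q^2 - ∑' m : ℕ, (w^3*q^2 * T q (w*q) m) := by
        rw [tsum_congr hkey]
    _ = w^2*q + w^3*q^2 - w^3*q^2 * ∑' m, T q (w*q) m := by rw [tsum_mul_left]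


/-- pentagonal term -/
noncomputable def b (q z : ℂ) (n : ℕ) : ℂ :=
  (-1 : ℂ) ^ (n + 1) * (z ^ (3 * (n + 1) - 1) * q ^ ((n + 1) * (3 * (n + 1) - 1) / 2) +
        z ^ (3 * (n + 1)) * q ^ ((n + 1) * (3 * (n + 1) + 1) / 2))

/-- remainder coefficient -/
noncomputable def c (q z : ℂ) (N : ℕ) : ℂ := (-1)^N * z^(3*N) * q^(N*(3*N+1)/2)

lemma expA (N : ℕ) : (N+1)*(3*(N+1)-1)/2 = N*(3*N+1)/2 + (2*N+1) := by
  have h1 : (N+1)*(3*(N+1)-1) = N*(3*N+1) + (2*N+1)*2 := by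
    have : 3*(N+1)-1 = 3*N+2 := by omega
    rw [this]; ring
  rw [h1, Nat.add_mul_div_right _ _ (by norm_num : (0:ℕ) < 2)]

lemma expB (N : ℕ) : (N+1)*(3*(N+1)+1)/2 = N*(3*N+1)/2 + (3*N+2) := by
  have h1 : (N+1)*(3*(N+1)+1) = N*(3*N+1) + (3*N+2)*2 := by ring
  rw [h1, Nat.add_mul_div_right _ _ (by norm_num : (0:ℕ) < 2)]

lemma hb_eq (q z : ℂ) (N : ℕ) :
    c q z N * (-((z*q^N)^2*q) - (z*q^N)^3*q^2) = b q z N := by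
  have h3 : 3*(N+1)-1 = 3*N+2 := by omega
  simp only [b, c, expA, expB]
  have h4 : 3*(N+1) = 3*N+3 := by ring
  rw [h4, show 3*N+3-1 = 3*N+2 by omega]
  ring

lemma hc_eq (q z : ℂ) (N : ℕ) :
    c q z N * (-((z*q^N)^3*q^2)) = c q z (N+1) := by
  simp only [c, expB]
  have h4 : 3*(N+1) = 3*N+3 := by ring
  rw [h4]
  ring

lemma norm_w_le (q z : ℂ) (hq0 : 0 < ‖q‖) (hq : ‖q‖ < 1) (N : ℕ) : ‖z * q ^ N‖ ≤ ‖z‖ := by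
  rw [norm_mul, norm_pow]
  calc ‖z‖ * ‖q‖ ^ N ≤ ‖z‖ * 1 :=
        mul_le_mul_of_nonneg_left (pow_le_one₀ hq0.le hq.le) (norm_nonneg z)
  _ = ‖z‖ := mul_one _

lemma iterate (q z : ℂ) (hq0 : 0 < ‖q‖) (hq : ‖q‖ < 1) (hz : ‖z‖ * ‖q‖ < 1) (N : ℕ) :
    (1 - ∑' m, T q z m) = 1 + (∑ n ∈ Finset.range N, b q z n)
      + c q z N * ((1 - ∑' m, T q (z * q ^ N) m) - 1) := by
  induction N with
  | zero => simp [c]; ring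
  | succ N ih =>
    rw [ih, Finset.sum_range_succ]
    have hw : ‖z * q ^ N‖ * ‖q‖ < 1 :=
      lt_of_le_of_lt (mul_le_mul_of_nonneg_right (norm_w_le q z hq0 hq N) (norm_nonneg q)) hz
    have hFE := FE q hq0 hq (z * q ^ N) hw
    have hpow : z * q ^ N * q = z * q ^ (N + 1) := by rw [pow_succ]; ring
    rw [hpow] at hFE
    rw [hFE, ← hb_eq q z N, ← hc_eq q z N]
    ring

lemma norm_T_le (q z w : ℂ) (hq0 : 0 < ‖q‖) (hq : ‖q‖ < 1) (hwz : ‖w‖ ≤ ‖z‖) (m : ℕ) :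
    ‖T q w m‖ ≤ (‖z‖^2*‖q‖*Real.exp (‖z‖*‖q‖/(1-‖q‖))) * (‖z‖*‖q‖)^m := by
  have hden : (0:ℝ) < 1 - ‖q‖ := by linarith
  calc ‖T q w m‖ = ‖w‖^(m+2)*‖q‖^(m+1)*‖∏ j ∈ Finset.range m, (1 - w*q^(j+1))‖ := by
        simp [T]
  _ ≤ ‖z‖^(m+2)*‖q‖^(m+1)*Real.exp (‖z‖*‖q‖/(1-‖q‖)) := by
      have h1 : ‖∏ j ∈ Finset.range m, (1 - w*q^(j+1))‖ ≤ Real.exp (‖z‖*‖q‖/(1-‖q‖)) := by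
        refine (prod_bound q w hq0 hq 1 m le_rfl).trans (Real.exp_le_exp.mpr ?_)
        have h2 : ‖w‖*‖q‖ ≤ ‖z‖*‖q‖ := mul_le_mul_of_nonneg_right hwz (norm_nonneg q)
        exact div_le_div_of_nonneg_right h2 hden.le
      exact mul_le_mul
        (mul_le_mul_of_nonneg_right (pow_le_pow_left₀ (norm_nonneg w) hwz _) (by positivity))
        h1 (norm_nonneg _) (by positivity)
  _ = (‖z‖^2*‖q‖*Real.exp (‖z‖*‖q‖/(1-‖q‖))) * (‖z‖*‖q‖)^m := by ring

lemma tsum_T_norm_le (q z w : ℂ) (hq0 : 0 < ‖q‖) (hq : ‖q‖ < 1) (hr : ‖z‖*‖q‖ < 1)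
    (hwz : ‖w‖ ≤ ‖z‖) :
    ‖∑' m, T q w m‖ ≤ (‖z‖^2*‖q‖*Real.exp (‖z‖*‖q‖/(1-‖q‖))) * (1-‖z‖*‖q‖)⁻¹ := by
  have hw : ‖w‖ * ‖q‖ < 1 :=
    lt_of_le_of_lt (mul_le_mul_of_nonneg_right hwz (norm_nonneg q)) hr
  have hsg := (summable_geometric_of_lt_one (by positivity : (0:ℝ) ≤ ‖z‖*‖q‖) hr).mul_left
    (‖z‖^2*‖q‖*Real.exp (‖z‖*‖q‖/(1-‖q‖)))
  have hnorm : Summable (fun m => ‖T q w m‖) := by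
    simpa [T] using summable_aux_norm q hq0 hq w hw 2 1 1 le_rfl
  calc ‖∑' m, T q w m‖ ≤ ∑' m, ‖T q w m‖ := norm_tsum_le_tsum_norm hnorm
  _ ≤ ∑' m : ℕ, (‖z‖^2*‖q‖*Real.exp (‖z‖*‖q‖/(1-‖q‖))) * (‖z‖*‖q‖)^m :=
      Summable.tsum_le_tsum (norm_T_le q z w hq0 hq hwz) hnorm hsg
  _ = (‖z‖^2*‖q‖*Real.exp (‖z‖*‖q‖/(1-‖q‖))) * (1-‖z‖*‖q‖)⁻¹ := by
      rw [tsum_mul_left, tsum_geometric_of_lt_one (by positivity) hr]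

lemma norm_b_le (q z : ℂ) (hq0 : 0 < ‖q‖) (hq : ‖q‖ < 1) (hr : ‖z‖*‖q‖ < 1) (n : ℕ) :
    ‖b q z n‖ ≤ 2*‖z‖*(‖z‖*‖q‖)^n := by
  have hr0 : (0:ℝ) ≤ ‖z‖*‖q‖ := by positivity
  have h3 : 3*(n+1)-1 = 3*n+2 := by omega
  have he1 : 3*n+1 ≤ (n+1)*(3*(n+1)-1)/2 := by
    rw [h3, Nat.le_div_iff_mul_le (by norm_num)]
    have h : n ≤ n*n := by nlinarith
    nlinarith [h]
  have he2 : 3*n+2 ≤ (n+1)*(3*(n+1)+1)/2 := by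
    rw [Nat.le_div_iff_mul_le (by norm_num)]
    have h : n ≤ n*n := by nlinarith
    nlinarith [h]
  have t1 : ‖z‖^(3*(n+1)-1) * ‖q‖^((n+1)*(3*(n+1)-1)/2) ≤ ‖z‖*(‖z‖*‖q‖)^n := by
    rw [h3]
    calc ‖z‖^(3*n+2) * ‖q‖^((n+1)*(3*(n+1)-1)/2)
        ≤ ‖z‖^(3*n+2) * ‖q‖^(3*n+1) :=
          mul_le_mul_of_nonneg_left (pow_le_pow_of_le_one hq0.le hq.le he1) (by positivity)
      _ = ‖z‖ * (‖z‖*‖q‖)^(3*n+1) := by ring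
      _ ≤ ‖z‖ * (‖z‖*‖q‖)^n :=
          mul_le_mul_of_nonneg_left (pow_le_pow_of_le_one hr0 hr.le (by omega)) (norm_nonneg z)
  have t2 : ‖z‖^(3*(n+1)) * ‖q‖^((n+1)*(3*(n+1)+1)/2) ≤ ‖z‖*(‖z‖*‖q‖)^n := by
    have h4 : 3*(n+1) = 3*n+3 := by ring
    rw [h4]
    calc ‖z‖^(3*n+3) * ‖q‖^((n+1)*(3*(n+1)+1)/2)
        ≤ ‖z‖^(3*n+3) * ‖q‖^(3*n+2) :=
          mul_le_mul_of_nonneg_left (pow_le_pow_of_le_one hq0.le hq.le he2) (by positivity)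
      _ = ‖z‖ * (‖z‖*‖q‖)^(3*n+2) := by ring
      _ ≤ ‖z‖ * (‖z‖*‖q‖)^n :=
          mul_le_mul_of_nonneg_left (pow_le_pow_of_le_one hr0 hr.le (by omega)) (norm_nonneg z)
  calc ‖b q z n‖ = ‖z ^ (3*(n+1)-1) * q ^ ((n+1)*(3*(n+1)-1)/2)
          + z ^ (3*(n+1)) * q ^ ((n+1)*(3*(n+1)+1)/2)‖ := by
        simp [b, norm_mul]
  _ ≤ ‖z ^ (3*(n+1)-1) * q ^ ((n+1)*(3*(n+1)-1)/2)‖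
        + ‖z ^ (3*(n+1)) * q ^ ((n+1)*(3*(n+1)+1)/2)‖ := norm_add_le _ _
  _ = ‖z‖^(3*(n+1)-1) * ‖q‖^((n+1)*(3*(n+1)-1)/2)
        + ‖z‖^(3*(n+1)) * ‖q‖^((n+1)*(3*(n+1)+1)/2) := by simp [norm_mul]
  _ ≤ ‖z‖*(‖z‖*‖q‖)^n + ‖z‖*(‖z‖*‖q‖)^n := add_le_add t1 t2
  _ = 2*‖z‖*(‖z‖*‖q‖)^n := by ring

lemma norm_c_le (q z : ℂ) (hq0 : 0 < ‖q‖) (hq : ‖q‖ < 1) (hr : ‖z‖*‖q‖ < 1) (N : ℕ)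
    (hN : 2 ≤ N) : ‖c q z N‖ ≤ (‖z‖*‖q‖)^N := by
  have hr0 : (0:ℝ) ≤ ‖z‖*‖q‖ := by positivity
  have hE : 3*N ≤ N*(3*N+1)/2 := by
    rw [Nat.le_div_iff_mul_le (by norm_num)]
    have h : 2*N ≤ N*N := by nlinarith
    nlinarith [h]
  calc ‖c q z N‖ = ‖z‖^(3*N) * ‖q‖^(N*(3*N+1)/2) := by simp [c, norm_mul]
  _ ≤ ‖z‖^(3*N) * ‖q‖^(3*N) :=
      mul_le_mul_of_nonneg_left (pow_le_pow_of_le_one hq0.le hq.le hE) (by positivity)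
  _ = (‖z‖*‖q‖)^(3*N) := by ring
  _ ≤ (‖z‖*‖q‖)^N := pow_le_pow_of_le_one hr0 hr.le (by omega)

end AndrewsPentAux

/-- Andrews' two-variable generalization of Euler's pentagonal number theorem:
for `0 < ‖q‖ < 1` and `‖z‖ < 1/‖q‖`,
`1 - ∑_{m=1}^∞ z^{m+1} q^m ∏_{j=1}^{m-1} (1 - z q^j)
  = 1 + ∑_{n=1}^∞ (-1)^n (z^{3n-1} q^{n(3n-1)/2} + z^{3n} q^{n(3n+1)/2})`,
both series converging absolutely. -/
theorem andrews_generalized_pentagonal (q z : ℂ) (hq0 : 0 < ‖q‖) (hq : ‖q‖ < 1)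
    (hz : ‖z‖ < 1 / ‖q‖) :
    Summable (fun m : ℕ =>
      ‖z ^ (m + 2) * q ^ (m + 1) * ∏ j ∈ Finset.range m, (1 - z * q ^ (j + 1))‖) ∧
    Summable (fun n : ℕ =>
      ‖(-1 : ℂ) ^ (n + 1) * (z ^ (3 * (n + 1) - 1) * q ^ ((n + 1) * (3 * (n + 1) - 1) / 2) +
        z ^ (3 * (n + 1)) * q ^ ((n + 1) * (3 * (n + 1) + 1) / 2))‖) ∧
    1 - ∑' m : ℕ, z ^ (m + 2) * q ^ (m + 1) * ∏ j ∈ Finset.range m, (1 - z * q ^ (j + 1)) =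
      1 + ∑' n : ℕ, (-1 : ℂ) ^ (n + 1) *
        (z ^ (3 * (n + 1) - 1) * q ^ ((n + 1) * (3 * (n + 1) - 1) / 2) +
          z ^ (3 * (n + 1)) * q ^ ((n + 1) * (3 * (n + 1) + 1) / 2)) := by
  open AndrewsPentAux in
  have hr : ‖z‖ * ‖q‖ < 1 := (lt_div_iff₀ hq0).mp hz
  have hr0 : (0:ℝ) ≤ ‖z‖ * ‖q‖ := by positivity
  have hS1 : Summable (fun m => ‖T q z m‖) := by
    simpa [T] using summable_aux_norm q hq0 hq z hr 2 1 1 le_rfl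
  have hS2 : Summable (fun n => ‖b q z n‖) :=
    Summable.of_nonneg_of_le (fun n => norm_nonneg _) (norm_b_le q z hq0 hq hr)
      ((summable_geometric_of_lt_one hr0 hr).mul_left (2*‖z‖))
  -- remainder tends to zero
  set B : ℝ := (‖z‖^2*‖q‖*Real.exp (‖z‖*‖q‖/(1-‖q‖))) * (1-‖z‖*‖q‖)⁻¹ with hBdef
  have hB0 : 0 ≤ B := by
    have : (0:ℝ) < 1-‖z‖*‖q‖ := by linarith
    positivity
  set R : ℕ → ℂ := fun N => c q z N * ((1 - ∑' m, T q (z * q ^ N) m) - 1) with hRdef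
  have hRle : ∀ N, 2 ≤ N → ‖R N‖ ≤ B * (‖z‖*‖q‖)^N := by
    intro N hN
    have h1 : ‖R N‖ = ‖c q z N‖ * ‖∑' m, T q (z * q ^ N) m‖ := by
      simp [hRdef, norm_mul]
    rw [h1]
    calc ‖c q z N‖ * ‖∑' m, T q (z * q ^ N) m‖ ≤ (‖z‖*‖q‖)^N * B :=
          mul_le_mul (norm_c_le q z hq0 hq hr N hN)
            (tsum_T_norm_le q z _ hq0 hq hr (norm_w_le q z hq0 hq N))
            (norm_nonneg _) (by positivity)
    _ = B * (‖z‖*‖q‖)^N := by ring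
  have hR0 : Tendsto R atTop (𝓝 0) := by
    rw [tendsto_zero_iff_norm_tendsto_zero]
    apply squeeze_zero' (Eventually.of_forall fun N => norm_nonneg _)
      (eventually_atTop.mpr ⟨2, hRle⟩)
    have := (tendsto_pow_atTop_nhds_zero_of_lt_one hr0 hr).const_mul B
    simpa using this
  have hps : ∀ N, ∑ n ∈ Finset.range N, b q z n = ((1 - ∑' m, T q z m) - 1) - R N := by
    intro N
    have := iterate q z hq0 hq hr N
    simp only [hRdef]
    linear_combination -this
  have hTendPS : Tendsto (fun N => ∑ n ∈ Finset.range N, b q z n) atTop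
      (𝓝 ((1 - ∑' m, T q z m) - 1)) := by
    have h2 : Tendsto (fun N => ((1 - ∑' m, T q z m) - 1) - R N) atTop
        (𝓝 (((1 - ∑' m, T q z m) - 1) - 0)) := tendsto_const_nhds.sub hR0
    rw [sub_zero] at h2
    exact h2.congr (fun N => (hps N).symm)
  have hsumb : Summable (b q z) := hS2.of_norm
  have hhs : HasSum (b q z) ((1 - ∑' m, T q z m) - 1) :=
    (hsumb.hasSum_iff_tendsto_nat).mpr hTendPS
  refine ⟨hS1, hS2, ?_⟩
  show 1 - ∑' m, T q z m = 1 + ∑' n, b q z n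
  rw [hhs.tsum_eq]
  ring
end

section
/- Let σ(n) denote the sum of all positive divisors of n. For every complex number x with |x| < 1, ∑_{n=1}^∞ σ(n) x^n = ∑_{m=1}^∞ m x^m / (1 − x^m), both series converging absolutely (the Lambert series for the sum-of-divisors function). -/
/-!
Expanding `m x^m / (1 - x^m) = ∑_{k ≥ 1} m x^{mk}` turns the right-hand side into a double
series over pairs `(m, k)`; grouping the terms by `n = mk` collects `∑_{m ∣ n} m = σ(n)` in front
of `x^n` (this is `tsum_pow_div_one_sub_eq_tsum_sigma`, indexed by `ℕ+`). Both series
converge absolutely because `σ(n) ≤ n²` and `‖1 - x^m‖⁻¹ → 1`.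
-/

open ArithmeticFunction Filter Topology
open scoped ArithmeticFunction.sigma

section

variable {𝕜 : Type*} [NormedField 𝕜] {r : 𝕜}

lemma summable_norm_sigma_mul_pow (k : ℕ) (hr : ‖r‖ < 1) :
    Summable fun n : ℕ ↦ ‖(σ k n : 𝕜) * r ^ n‖ := by
  refine (summable_pow_mul_geometric_of_norm_lt_one (k + 1) (r := ‖r‖) (by simpa using hr))
    |>.of_nonneg_of_le (fun _ ↦ norm_nonneg _) fun n ↦ ?_
  calc ‖(σ k n : 𝕜) * r ^ n‖ ≤ σ k n * ‖r‖ ^ n := by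
        rw [norm_mul, norm_pow]
        gcongr
        simpa using Nat.norm_cast_le (α := 𝕜) (σ k n)
    _ ≤ (n : ℝ) ^ (k + 1) * ‖r‖ ^ n := by
        gcongr
        exact_mod_cast sigma_le_pow_succ k n

lemma summable_norm_pow_mul_pow_div_one_sub_pow (k : ℕ) (hr : ‖r‖ < 1) :
    Summable fun n : ℕ ↦ ‖(n : 𝕜) ^ k * r ^ n / (1 - r ^ n)‖ := by
  have hlim : Tendsto (fun n : ℕ ↦ ‖(1 - r ^ n)⁻¹‖) cofinite (𝓝 ‖(1 - 0 : 𝕜)⁻¹‖) := by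
    rw [Nat.cofinite_eq_atTop]
    exact (((tendsto_pow_atTop_nhds_zero_of_norm_lt_one hr).const_sub 1).inv₀ (by simp)).norm
  simpa [div_eq_mul_inv] using
    (by simpa using summable_norm_pow_mul_geometric_of_norm_lt_one k hr :
      Summable fun n : ℕ ↦ ‖‖(n : 𝕜) ^ k * r ^ n‖‖).mul_tendsto_const hlim

end

/-- The Lambert series for the sum-of-divisors function: for `‖x‖ < 1`,
`∑_{n=1}^∞ σ(n) x^n = ∑_{m=1}^∞ m x^m / (1 - x^m)`, both series converging
absolutely. -/
theorem lambert_series_sigma (x : ℂ) (hx : ‖x‖ < 1) :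
    Summable (fun n : ℕ => ‖(σ 1 (n + 1) : ℂ) * x ^ (n + 1)‖) ∧
    Summable (fun m : ℕ => ‖((m : ℂ) + 1) * x ^ (m + 1) / (1 - x ^ (m + 1))‖) ∧
    ∑' n : ℕ, (σ 1 (n + 1) : ℂ) * x ^ (n + 1) =
      ∑' m : ℕ, ((m : ℂ) + 1) * x ^ (m + 1) / (1 - x ^ (m + 1)) := by
  refine ⟨?_, ?_, ?_⟩
  · exact_mod_cast (summable_nat_add_iff 1).mpr (summable_norm_sigma_mul_pow 1 hx)
  · simpa using (summable_nat_add_iff 1).mpr (summable_norm_pow_mul_pow_div_one_sub_pow 1 hx)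
  · have lambert_pnat := tsum_pow_div_one_sub_eq_tsum_sigma hx 1
    rw [tsum_pnat_eq_tsum_succ (f := fun n ↦ (n : ℂ) ^ 1 * x ^ n / (1 - x ^ n)),
      tsum_pnat_eq_tsum_succ (f := fun n ↦ (σ 1 n : ℂ) * x ^ n)] at lambert_pnat
    simpa using lambert_pnat.symm
end

section
/- Let σ(n) denote the sum of all positive divisors of n. For every complex number x with |x| < 1, (∑_{n=1}^∞ σ(n) x^n) · (∑_{n ∈ ℤ} (−1)^n x^{n(3n−1)/2}) = − ∑_{n ∈ ℤ} (−1)^n (n(3n−1)/2) x^{n(3n−1)/2} (Euler's identity expressing the divisor generating function times the pentagonal series as the negated 'logarithmically differentiated' pentagonal series, from which his divisor recurrence follows). -/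
open ArithmeticFunction Finset
open scoped ArithmeticFunction.sigma

/-- Distinct partitions of `m`, encoded as finsets of positive integers with sum `m`. -/
def DP (m : ℕ) : Finset (Finset ℕ) :=
  (Finset.Icc 1 m).powerset.filter (fun S => S.sum (fun x => x) = m)

/-- Signed count of distinct partitions. -/
def pb (m : ℕ) : ℤ := ∑ S ∈ DP m, (-1) ^ S.card

lemma mem_DP {m : ℕ} {S : Finset ℕ} : S ∈ DP m ↔ (0 ∉ S ∧ S.sum (fun x => x) = m) := by
  constructor
  · rintro h
    rw [DP, Finset.mem_filter, Finset.mem_powerset] at h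
    refine ⟨fun h0 => ?_, h.2⟩
    have := h.1 h0
    simp at this
  · rintro ⟨h0, hs⟩
    rw [DP, Finset.mem_filter, Finset.mem_powerset]
    refine ⟨fun x hx => ?_, hs⟩
    have hx1 : 1 ≤ x := by
      rcases Nat.eq_zero_or_pos x with h | h
      · exact absurd (h ▸ hx) h0
      · exact h
    have hxm : x ≤ m := by
      calc x ≤ S.sum (fun x => x) := Finset.single_le_sum (fun i _ => Nat.zero_le i) hx
      _ = m := hs
    exact Finset.mem_Icc.mpr ⟨hx1, hxm⟩

lemma pb_zero : pb 0 = 1 := by decide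

lemma pent_two_mul (n : ℤ) : 2 * (n * (3 * n - 1) / 2) = n * (3 * n - 1) := by
  rw [Int.mul_ediv_cancel']
  rcases Int.even_or_odd n with ⟨k, hk⟩ | ⟨k, hk⟩
  · exact ⟨k * (3 * n - 1), by rw [hk]; ring⟩
  · exact ⟨n * (3 * k + 1), by rw [hk]; ring⟩

lemma pent_nonneg (n : ℤ) : 0 ≤ n * (3 * n - 1) / 2 := by
  have h2 := pent_two_mul n
  nlinarith [sq_nonneg n, sq_nonneg (n - 1)]

lemma pent_inj {a b : ℤ} (hab : a * (3 * a - 1) / 2 = b * (3 * b - 1) / 2) : a = b := by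
  have ha := pent_two_mul a
  have hb := pent_two_mul b
  have h1 : a * (3 * a - 1) = b * (3 * b - 1) := by rw [← ha, ← hb, hab]
  have h3 : (a - b) * (3 * (a + b) - 1) = 0 := by nlinarith [h1]
  rcases mul_eq_zero.mp h3 with h | h
  · linarith
  · omega

lemma toNat_pent_inj {a b : ℤ}
    (hab : (a * (3 * a - 1) / 2).toNat = (b * (3 * b - 1) / 2).toNat) : a = b := by
  apply pent_inj
  have ha := pent_nonneg a
  have hb := pent_nonneg b
  omega

lemma sum_le_of_mem {S : Finset ℕ} {s : ℕ} (hs : s ∈ S) : s ≤ S.sum (fun x => x) :=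
  Finset.single_le_sum (fun i _ => Nat.zero_le i) hs

lemma stepA (m : ℕ) (hm : 1 ≤ m) :
    (m : ℤ) * pb m + ∑ j ∈ Finset.Icc 1 m, (σ 1 j : ℤ) * pb (m - j) = 0 := by
  classical
  set Om : Finset (Σ _ : ℕ, Σ _ : ℕ, Finset ℕ) :=
    (Finset.Icc 1 m).sigma (fun j => (j.divisors).sigma (fun _d => DP (m - j))) with hOm
  have memOm : ∀ (j d : ℕ) (S : Finset ℕ),
      (⟨j, d, S⟩ : Σ _ : ℕ, Σ _ : ℕ, Finset ℕ) ∈ Om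
        ↔ (1 ≤ j ∧ j ≤ m ∧ d ∣ j ∧ d ≠ 0 ∧ S ∈ DP (m - j)) := by
    intro j d S
    simp only [hOm, Finset.mem_sigma, Nat.mem_divisors, Finset.mem_Icc]
    constructor
    · rintro ⟨⟨h0, h1⟩, ⟨h2, h2'⟩, h3⟩
      refine ⟨h0, h1, h2, fun hd0 => ?_, h3⟩
      subst hd0
      have := Nat.eq_zero_of_zero_dvd h2
      omega
    · rintro ⟨h0, h1, h2, h3, h4⟩
      exact ⟨⟨h0, h1⟩, ⟨h2, by omega⟩, h4⟩
  set w : (Σ _ : ℕ, Σ _ : ℕ, Finset ℕ) → ℤ :=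
    fun t => (t.2.1 : ℤ) * (-1) ^ t.2.2.card with hw
  have hsecond : ∑ j ∈ Finset.Icc 1 m, (σ 1 j : ℤ) * pb (m - j) = ∑ t ∈ Om, w t := by
    rw [hOm, Finset.sum_sigma]
    apply Finset.sum_congr rfl
    intro j _hj
    rw [Finset.sum_sigma]
    rw [sigma_apply, pb]
    push_cast
    rw [Finset.sum_mul]
    apply Finset.sum_congr rfl
    intro d _hd
    rw [Finset.mul_sum]
    simp [hw]
  have hfirst : (m : ℤ) * pb m
      = ∑ t ∈ (DP m).sigma (fun S => S), ((t.2 : ℤ) * (-1) ^ t.1.card) := by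
    rw [Finset.sum_sigma]
    rw [pb, Finset.mul_sum]
    apply Finset.sum_congr rfl
    intro S hS
    dsimp only
    rw [← Finset.sum_mul]
    have h1 : ∑ s ∈ S, (s : ℤ) = (m : ℤ) := by
      rw [← Nat.cast_sum]
      exact_mod_cast (mem_DP.mp hS).2
    rw [h1]
  set p : (Σ _ : ℕ, Σ _ : ℕ, Finset ℕ) → Prop := fun t => t.2.1 = t.1 ∧ t.2.1 ∉ t.2.2 with hp
  have hsplit : ∑ t ∈ Om, w t
      = ∑ t ∈ Om.filter p, w t + ∑ t ∈ Om.filter (fun t => ¬ p t), w t :=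
    (Finset.sum_filter_add_sum_filter_not Om p w).symm
  -- Part 1 : the filtered part cancels the first term
  have hpart1 : ∑ t ∈ Om.filter p, w t = - ((m : ℤ) * pb m) := by
    rw [hfirst, ← Finset.sum_neg_distrib]
    apply Finset.sum_nbij' (i := fun t => (⟨insert t.2.1 t.2.2, t.2.1⟩ : Σ _ : Finset ℕ, ℕ))
      (j := fun u => (⟨u.2, u.2, u.1.erase u.2⟩ : Σ _ : ℕ, Σ _ : ℕ, Finset ℕ))
    · rintro ⟨j, d, S⟩ ht
      try dsimp only at *
      simp only [Finset.mem_filter, memOm, hp] at ht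
      obtain ⟨⟨h1, h2, h3, h4, h5⟩, hdj, hdS⟩ := ht
      try simp only at hdj hdS ⊢
      subst hdj
      rw [Finset.mem_sigma]
      constructor
      · rw [mem_DP]
        obtain ⟨hS0, hSsum⟩ := mem_DP.mp h5
        constructor
        · intro h0
          rcases Finset.mem_insert.mp h0 with h | h
          · omega
          · exact hS0 h
        · rw [Finset.sum_insert hdS, hSsum]
          omega
      · exact Finset.mem_insert_self _ _
    · rintro ⟨S, s⟩ hu
      try dsimp only at *
      rw [Finset.mem_sigma] at hu
      obtain ⟨hS, hs⟩ := hu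
      replace hS : S ∈ DP m := hS
      replace hs : s ∈ S := hs
      obtain ⟨hS0, hSsum⟩ := mem_DP.mp hS
      try simp only
      have hs1 : 1 ≤ s := by
        rcases Nat.eq_zero_or_pos s with h | h
        · exact absurd (h ▸ hs) hS0
        · exact h
      have hsm : s ≤ m := by
        have := sum_le_of_mem hs
        omega
      rw [Finset.mem_filter, memOm]
      refine ⟨⟨hs1, hsm, dvd_rfl, by omega, ?_⟩, rfl, Finset.notMem_erase _ _⟩
      rw [mem_DP]
      constructor
      · intro h0
        exact hS0 (Finset.mem_of_mem_erase h0)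
      · have h6 : s + (S.erase s).sum (fun x => x) = S.sum (fun x => x) :=
          Finset.add_sum_erase S (fun x => x) hs
        omega
    · rintro ⟨j, d, S⟩ ht
      try dsimp only at *
      simp only [Finset.mem_filter, memOm, hp] at ht
      obtain ⟨htm, hdj, hdS⟩ := ht
      try simp only at hdj hdS ⊢
      subst hdj
      rw [Finset.erase_insert hdS]
    · rintro ⟨S, s⟩ hu
      try dsimp only at *
      rw [Finset.mem_sigma] at hu
      have hs : s ∈ S := hu.2
      show (⟨insert s (S.erase s), s⟩ : Σ _ : Finset ℕ, ℕ) = ⟨S, s⟩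
      rw [Finset.insert_erase hs]
    · rintro ⟨j, d, S⟩ ht
      try dsimp only at *
      rw [Finset.mem_filter] at ht
      obtain ⟨htm, hdj, hdS⟩ := ht
      simp only [hw] at hdS ⊢
      rw [Finset.card_insert_of_notMem hdS]
      ring
  -- Part 2 : the rest cancels via the involution
  have hpart2 : ∑ t ∈ Om.filter (fun t => ¬ p t), w t = 0 := by
    apply Finset.sum_involution
      (g := fun t _ => if t.2.1 ∈ t.2.2
        then (⟨t.1 + t.2.1, t.2.1, t.2.2.erase t.2.1⟩ : Σ _ : ℕ, Σ _ : ℕ, Finset ℕ)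
        else (⟨t.1 - t.2.1, t.2.1, insert t.2.1 t.2.2⟩ : Σ _ : ℕ, Σ _ : ℕ, Finset ℕ))
    · rintro ⟨j, d, S⟩ ht
      try dsimp only at *
      simp only [Finset.mem_filter, memOm, hp] at ht
      obtain ⟨⟨h1, h2, h3, h4, h5⟩, hnp⟩ := ht
      simp only [hw]
      by_cases hdS : d ∈ S
      · rw [if_pos hdS]
        try simp only
        rw [Finset.card_erase_of_mem hdS]
        have hcard : 1 ≤ S.card := Finset.card_pos.mpr ⟨d, hdS⟩
        obtain ⟨k, hk⟩ : ∃ k, S.card = k + 1 := ⟨S.card - 1, by omega⟩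
        rw [hk]
        simp only [Nat.add_sub_cancel, pow_succ]
        ring
      · rw [if_neg hdS]
        try simp only
        rw [Finset.card_insert_of_notMem hdS, pow_succ]
        ring
    · rintro ⟨j, d, S⟩ ht hne
      try dsimp only at *
      by_cases hdS : d ∈ S
      · rw [if_pos hdS]
        intro hcon
        have := congrArg (fun t : Σ _ : ℕ, Σ _ : ℕ, Finset ℕ => t.1) hcon
        simp only at this
        simp only [Finset.mem_filter, memOm, hp] at ht
        omega
      · rw [if_neg hdS]
        intro hcon
        have := congrArg (fun t : Σ _ : ℕ, Σ _ : ℕ, Finset ℕ => t.2.2) hcon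
        simp only at this
        rw [← this] at hdS
        exact hdS (Finset.mem_insert_self _ _)
    · rintro ⟨j, d, S⟩ ht
      try dsimp only at *
      simp only [Finset.mem_filter, memOm, hp] at ht
      obtain ⟨⟨h1, h2, h3, h4, h5⟩, hnp⟩ := ht
      obtain ⟨hS0, hSsum⟩ := mem_DP.mp h5
      by_cases hdS : d ∈ S
      · rw [if_pos hdS]
        simp only [Finset.mem_filter, memOm, hp]
        have hdsum : d ≤ S.sum (fun x => x) := sum_le_of_mem hdS
        have herase : (S.erase d).sum (fun x => x) = S.sum (fun x => x) - d := by
          have h6 : d + (S.erase d).sum (fun x => x) = S.sum (fun x => x) :=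
            Finset.add_sum_erase S (fun x => x) hdS
          omega
        refine ⟨⟨by omega, by omega, Nat.dvd_add h3 dvd_rfl, h4, ?_⟩, ?_⟩
        · rw [mem_DP]
          refine ⟨fun h0 => hS0 (Finset.mem_of_mem_erase h0), ?_⟩
          rw [herase, hSsum]
          omega
        · intro hcon
          obtain ⟨hc1, _⟩ := hcon
          omega
      · rw [if_neg hdS]
        simp only [Finset.mem_filter, memOm, hp]
        -- here d ∣ j and d ≠ j (since ¬p and d ∉ S), so 2d ≤ j
        have hdj : d ≠ j := by
          intro h0
          exact hnp ⟨h0, hdS⟩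
        have hdle : d ≤ j := Nat.le_of_dvd (by omega) h3
        have h2d : 2 * d ≤ j := by
          rcases h3 with ⟨c, hc⟩
          have hc2 : 2 ≤ c := by
            rcases Nat.lt_or_ge c 2 with h | h
            · interval_cases c <;> omega
            · exact h
          calc 2 * d ≤ c * d := Nat.mul_le_mul_right d hc2
            _ = j := by rw [hc]; ring
        refine ⟨⟨by omega, by omega, Nat.dvd_sub h3 dvd_rfl, h4, ?_⟩, ?_⟩
        · rw [mem_DP]
          constructor
          · intro h0
            rcases Finset.mem_insert.mp h0 with h | h
            · omega
            · exact hS0 h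
          · rw [Finset.sum_insert hdS, hSsum]
            omega
        · intro hcon
          obtain ⟨_, hc2⟩ := hcon
          exact hc2 (Finset.mem_insert_self _ _)
    · rintro ⟨j, d, S⟩ ht
      try dsimp only at *
      simp only [Finset.mem_filter, memOm, hp] at ht
      obtain ⟨⟨h1, h2, h3, h4, h5⟩, hnp⟩ := ht
      by_cases hdS : d ∈ S
      · rw [if_pos hdS]
        try simp only
        rw [if_neg (Finset.notMem_erase _ _)]
        have : j + d - d = j := by omega
        rw [this, Finset.insert_erase hdS]
      · rw [if_neg hdS]
        try simp only
        rw [if_pos (Finset.mem_insert_self _ _)]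
        have hdj : d ≠ j := fun h0 => hnp ⟨h0, hdS⟩
        have hdle : d ≤ j := Nat.le_of_dvd (by omega) h3
        have : j - d + d = j := by omega
        rw [this, Finset.erase_insert hdS]
  rw [hsecond, hsplit, hpart1, hpart2]
  ring


/-! ### staircase length -/

def stairP (S : Finset ℕ) (a i : ℕ) : Prop := a - i ∉ S ∨ a < i

instance stairP.dec (S : Finset ℕ) (a : ℕ) : DecidablePred (stairP S a) := fun i => by
  unfold stairP; infer_instance

lemma stairP_ex (S : Finset ℕ) (a : ℕ) : ∃ i, stairP S a i :=
  ⟨a + 1, Or.inr (Nat.lt_succ_self a)⟩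

noncomputable def stairLen (S : Finset ℕ) (a : ℕ) : ℕ := Nat.find (stairP_ex S a)

lemma stairLen_le {S : Finset ℕ} {a : ℕ} (h0 : 0 ∉ S) : stairLen S a ≤ a :=
  Nat.find_le (Or.inl (by simpa using h0))

lemma stairLen_pos {S : Finset ℕ} {a : ℕ} (ha : a ∈ S) : 1 ≤ stairLen S a := by
  rcases Nat.eq_zero_or_pos (stairLen S a) with h | h
  · exfalso
    have hsp := Nat.find_spec (stairP_ex S a)
    rw [show Nat.find (stairP_ex S a) = stairLen S a from rfl, h] at hsp
    rcases hsp with h' | h'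
    · simp only [Nat.sub_zero] at h'
      exact h' ha
    · omega
  · exact h

lemma mem_of_lt_stairLen {S : Finset ℕ} {a i : ℕ} (hi : i < stairLen S a) :
    a - i ∈ S ∧ i ≤ a := by
  have h := Nat.find_min (stairP_ex S a) hi
  unfold stairP at h
  push_neg at h
  exact ⟨h.1, h.2⟩

lemma stairLen_gap {S : Finset ℕ} {a : ℕ} (h0 : 0 ∉ S) : a - stairLen S a ∉ S := by
  have hsp : stairP S a (stairLen S a) := Nat.find_spec (stairP_ex S a)
  have hle := stairLen_le (S := S) (a := a) h0
  rcases hsp with h | h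
  · exact h
  · exact absurd hle (by omega)

lemma stairLen_block {S : Finset ℕ} {a x : ℕ}
    (hx1 : a - stairLen S a + 1 ≤ x) (hx2 : x ≤ a) : x ∈ S := by
  have h := mem_of_lt_stairLen (S := S) (a := a) (i := a - x) (by omega)
  have hax : a - (a - x) = x := by omega
  rw [hax] at h
  exact h.1

/-! ### sum of shifted interval -/

lemma sum_Icc_shift (u v : ℕ) :
    ∑ x ∈ Finset.Icc (u + 1) (v + 1), x
      = (∑ x ∈ Finset.Icc u v, x) + (Finset.Icc u v).card := by
  have h : ∑ x ∈ Finset.Icc (u + 1) (v + 1), x = ∑ x ∈ Finset.Icc u v, (x + 1) := by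
    apply Finset.sum_nbij' (i := fun x => x - 1) (j := fun x => x + 1)
    · intro x hx
      rw [Finset.mem_Icc] at *
      omega
    · intro x hx
      rw [Finset.mem_Icc] at *
      omega
    · intro x hx
      rw [Finset.mem_Icc] at hx
      omega
    · intro x hx
      rw [Finset.mem_Icc] at hx
      omega
    · intro x hx
      rw [Finset.mem_Icc] at hx
      omega
  rw [h, Finset.sum_add_distrib, Finset.sum_const, smul_eq_mul, mul_one]

/-! ### the involution -/

noncomputable def frk (S : Finset ℕ) : Finset ℕ :=
  if h : S.Nonempty then
    if S.min' h ≤ stairLen S (S.max' h) then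
      ((S.erase (S.min' h)) \ Finset.Icc (S.max' h - S.min' h + 1) (S.max' h)) ∪
        Finset.Icc (S.max' h - S.min' h + 2) (S.max' h + 1)
    else ((S \ Finset.Icc (S.max' h - stairLen S (S.max' h) + 1) (S.max' h)) ∪
        Finset.Icc (S.max' h - stairLen S (S.max' h)) (S.max' h - 1)) ∪ {stairLen S (S.max' h)}
  else ∅

def Exc (S : Finset ℕ) : Prop :=
  ∃ k, 1 ≤ k ∧ (S = Finset.Icc k (2 * k - 1) ∨ S = Finset.Icc (k + 1) (2 * k))

lemma DP_nonempty {m : ℕ} (hm : 1 ≤ m) {S : Finset ℕ} (hS : S ∈ DP m) : S.Nonempty := by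
  rcases Finset.eq_empty_or_nonempty S with h | h
  · exfalso
    have := (mem_DP.mp hS).2
    rw [h] at this
    simp at this
    omega
  · exact h

lemma caseA {m : ℕ} (hm : 1 ≤ m) {S : Finset ℕ} (hS : S ∈ DP m) (hne : S.Nonempty)
    (hsr : S.min' hne ≤ stairLen S (S.max' hne)) (hnex : ¬ Exc S) :
    frk S ∈ DP m ∧ ¬ Exc (frk S) ∧ frk (frk S) = S ∧ (frk S).card + 1 = S.card := by
  obtain ⟨h0, hsum⟩ := mem_DP.mp hS
  set a := S.max' hne with haa
  set s := S.min' hne with hss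
  set r := stairLen S a with hrr
  have haS : a ∈ S := S.max'_mem hne
  have hsS : s ∈ S := S.min'_mem hne
  have hxa : ∀ x ∈ S, x ≤ a := fun x hx => S.le_max' x hx
  have hxs : ∀ x ∈ S, s ≤ x := fun x hx => S.min'_le x hx
  have hs1 : 1 ≤ s := by
    rcases Nat.eq_zero_or_pos s with h | h
    · exact absurd (h ▸ hsS) h0
    · exact h
  have hsa : s ≤ a := hxa s hsS
  have hra : r ≤ a := stairLen_le h0
  have hr1 : 1 ≤ r := stairLen_pos haS
  have hgap : a - r ∉ S := stairLen_gap h0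
  have hblock : ∀ x, a - r + 1 ≤ x → x ≤ a → x ∈ S := fun x h1 h2 => stairLen_block h1 h2
  -- step 1 : a ≥ 2s
  have ha2s : 2 * s ≤ a := by
    by_contra hc
    push_neg at hc
    have hSfull : S = Finset.Icc s a := by
      apply Finset.Subset.antisymm
      · intro x hx
        rw [Finset.mem_Icc]
        exact ⟨hxs x hx, hxa x hx⟩
      · intro x hx
        rw [Finset.mem_Icc] at hx
        exact hblock x (by omega) hx.2
    have hgap' : a - r ∉ Finset.Icc s a := hSfull ▸ hgap
    rw [Finset.mem_Icc] at hgap'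
    push_neg at hgap'
    have hbot : a - r + 1 ≥ s := by
      by_contra hb
      push_neg at hb
      exact absurd (hSfull ▸ hblock (a - r + 1) le_rfl (by omega)) (by
        rw [Finset.mem_Icc]
        omega)
    -- so r = a - s + 1 and a = 2s - 1
    have : a = 2 * s - 1 := by omega
    exact hnex ⟨s, hs1, Or.inl (by rw [hSfull, this])⟩
  -- step 2 : the image
  set T := ((S.erase s) \ Finset.Icc (a - s + 1) a) ∪ Finset.Icc (a - s + 2) (a + 1) with hTT
  have hfrk : frk S = T := by
    rw [frk, dif_pos hne, if_pos hsr]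
  have memT : ∀ x, x ∈ T ↔
      ((x ∈ S ∧ x ≠ s ∧ ¬(a - s + 1 ≤ x ∧ x ≤ a)) ∨ (a - s + 2 ≤ x ∧ x ≤ a + 1)) := by
    intro x
    rw [hTT]
    simp only [Finset.mem_union, Finset.mem_sdiff, Finset.mem_erase, Finset.mem_Icc]
    tauto
  have hsub : Finset.Icc (a - s + 1) a ⊆ S.erase s := by
    intro x hx
    rw [Finset.mem_Icc] at hx
    rw [Finset.mem_erase]
    exact ⟨by omega, hblock x (by omega) hx.2⟩
  have hT1 : ∀ x ∈ T, x ≤ a + 1 := by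
    intro x hx
    rcases (memT x).mp hx with ⟨h1, _, _⟩ | ⟨_, h2⟩
    · exact le_trans (hxa x h1) (by omega)
    · exact h2
  have hT2 : ∀ x ∈ T, s + 1 ≤ x := by
    intro x hx
    rcases (memT x).mp hx with ⟨h1, h2, _⟩ | ⟨h2, _⟩
    · have := hxs x h1
      omega
    · omega
  have haT : a + 1 ∈ T := (memT _).mpr (Or.inr ⟨by omega, le_rfl⟩)
  have hgapT : a - s + 1 ∉ T := by
    rw [memT]
    push_neg
    constructor
    · rintro _ _
      constructor <;> omega
    · omega
  have hTne : T.Nonempty := ⟨a + 1, haT⟩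
  have hmaxT : T.max' hTne = a + 1 :=
    le_antisymm (Finset.max'_le _ _ _ hT1) (Finset.le_max' _ _ haT)
  have hminT : s + 1 ≤ T.min' hTne := hT2 _ (T.min'_mem hTne)
  -- step 5 : T ∈ DP m
  have hdisj : Disjoint ((S.erase s) \ Finset.Icc (a - s + 1) a) (Finset.Icc (a - s + 2) (a + 1)) := by
    rw [Finset.disjoint_left]
    intro x hx hx2
    rw [Finset.mem_sdiff, Finset.mem_erase, Finset.mem_Icc] at hx
    rw [Finset.mem_Icc] at hx2
    have := hxa x hx.1.2
    omega
  have hsumB : (∑ x ∈ Finset.Icc (a - s + 1) a, x) + (∑ x ∈ (S.erase s) \ Finset.Icc (a - s + 1) a, x)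
      = ∑ x ∈ S.erase s, x := by
    rw [add_comm]
    exact Finset.sum_sdiff hsub
  have hsumE : s + ∑ x ∈ S.erase s, x = ∑ x ∈ S, x :=
    Finset.add_sum_erase S (fun x => x) hsS
  have hsum2 : ∑ x ∈ Finset.Icc (a - s + 2) (a + 1), x
      = (∑ x ∈ Finset.Icc (a - s + 1) a, x) + s := by
    have h := sum_Icc_shift (a - s + 1) a
    rw [show a - s + 1 + 1 = a - s + 2 from rfl] at h
    rw [h, Nat.card_Icc]
    congr 1
    omega
  have hsumT : ∑ x ∈ T, x = m := by
    rw [hTT, Finset.sum_union hdisj, hsum2]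
    have : S.sum (fun x => x) = ∑ x ∈ S, x := rfl
    omega
  have hTDP : T ∈ DP m := by
    rw [mem_DP]
    refine ⟨fun hc => ?_, hsumT⟩
    have := hT2 0 hc
    omega
  -- step 6 : cards
  have hcardB : (Finset.Icc (a - s + 1) a).card = s := by
    rw [Nat.card_Icc]; omega
  have hcard2 : (Finset.Icc (a - s + 2) (a + 1)).card = s := by
    rw [Nat.card_Icc]; omega
  have hcardT : T.card + 1 = S.card := by
    rw [hTT, Finset.card_union_of_disjoint hdisj, hcard2]
    have h1 : ((S.erase s) \ Finset.Icc (a - s + 1) a).card + (Finset.Icc (a - s + 1) a).card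
        = (S.erase s).card := Finset.card_sdiff_add_card_eq_card hsub
    have h2 : (S.erase s).card + 1 = S.card := Finset.card_erase_add_one hsS
    omega
  -- step 7 : staircase length of T
  have hrT : stairLen T (a + 1) = s := by
    rw [stairLen]
    rw [Nat.find_eq_iff]
    constructor
    · left
      have : a + 1 - s = a - s + 1 := by omega
      rw [this]
      exact hgapT
    · intro i hi
      unfold stairP
      push_neg
      constructor
      · rw [memT]
        right
        omega
      · omega
  -- step 8 : T is not exceptional
  have hnexT : ¬ Exc T := by
    rintro ⟨k, hk1, hk2 | hk2⟩
    · have htop : 2 * k - 1 ≤ a + 1 := by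
        apply hT1
        rw [hk2, Finset.mem_Icc]
        omega
      rw [hk2] at haT hgapT
      have hin : a - s + 2 ∈ Finset.Icc k (2 * k - 1) := by
        rw [← hk2, memT]
        right
        omega
      rw [Finset.mem_Icc] at haT hin
      rw [Finset.mem_Icc] at hgapT
      push_neg at hgapT
      omega
    · have htop : 2 * k ≤ a + 1 := by
        apply hT1
        rw [hk2, Finset.mem_Icc]
        omega
      rw [hk2] at haT hgapT
      have hin : a - s + 2 ∈ Finset.Icc (k + 1) (2 * k) := by
        rw [← hk2, memT]
        right
        omega
      rw [Finset.mem_Icc] at haT hin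
      rw [Finset.mem_Icc] at hgapT
      push_neg at hgapT
      omega
  -- step 9 : frk T = S
  have hfrkT : frk T = S := by
    rw [frk, dif_pos hTne]
    rw [if_neg (by rw [hmaxT, hrT]; omega)]
    rw [hmaxT, hrT]
    have he1 : a + 1 - s + 1 = a - s + 2 := by omega
    have he2 : a + 1 - s = a - s + 1 := by omega
    have he3 : a + 1 - 1 = a := by omega
    rw [he1, he2, he3]
    ext x
    simp only [Finset.mem_union, Finset.mem_sdiff, Finset.mem_singleton, Finset.mem_Icc, memT x]
    constructor
    · rintro ((⟨hA | hB, hx2⟩ | hx) | rfl)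
      · exact hA.1
      · omega
      · exact hblock x (by omega) hx.2
      · exact hsS
    · intro hxS
      by_cases hx1 : x = s
      · exact Or.inr hx1
      · by_cases hx2 : a - s + 1 ≤ x
        · exact Or.inl (Or.inr ⟨hx2, hxa x hxS⟩)
        · have hxa' := hxa x hxS
          exact Or.inl (Or.inl ⟨Or.inl ⟨hxS, hx1, by omega⟩, by omega⟩)
  rw [hfrk]
  exact ⟨hTDP, hnexT, hfrkT, hcardT⟩

lemma caseB {m : ℕ} (hm : 1 ≤ m) {S : Finset ℕ} (hS : S ∈ DP m) (hne : S.Nonempty)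
    (hsr : stairLen S (S.max' hne) < S.min' hne) (hnex : ¬ Exc S) :
    frk S ∈ DP m ∧ ¬ Exc (frk S) ∧ frk (frk S) = S ∧ S.card + 1 = (frk S).card := by
  obtain ⟨h0, hsum⟩ := mem_DP.mp hS
  obtain ⟨a, haa⟩ : ∃ a, S.max' hne = a := ⟨_, rfl⟩
  obtain ⟨s, hss⟩ : ∃ s, S.min' hne = s := ⟨_, rfl⟩
  obtain ⟨r, hrr⟩ : ∃ r, stairLen S a = r := ⟨_, rfl⟩
  rw [haa] at hsr
  rw [hrr, hss] at hsr
  have haS : a ∈ S := haa ▸ S.max'_mem hne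
  have hsS : s ∈ S := hss ▸ S.min'_mem hne
  have hxa : ∀ x ∈ S, x ≤ a := fun x hx => haa ▸ S.le_max' x hx
  have hxs : ∀ x ∈ S, s ≤ x := fun x hx => hss ▸ S.min'_le x hx
  have hs1 : 1 ≤ s := by
    rcases Nat.eq_zero_or_pos s with h | h
    · exact absurd (h ▸ hsS) h0
    · exact h
  have hsa : s ≤ a := hxa s hsS
  have hra : r ≤ a := hrr ▸ stairLen_le h0
  have hr1 : 1 ≤ r := hrr ▸ stairLen_pos haS
  have hgap : a - r ∉ S := by rw [← hrr]; exact stairLen_gap h0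
  have hblock : ∀ x, a - r + 1 ≤ x → x ≤ a → x ∈ S := by
    intro x h1 h2
    rw [← hrr] at h1
    exact stairLen_block h1 h2
  have hbot : s ≤ a - r + 1 := by
    apply hxs
    apply hblock (a - r + 1) le_rfl
    omega
  -- step 1 : a ≥ 2r + 1
  have ha2r : 2 * r + 1 ≤ a := by
    rcases Nat.lt_or_ge (2 * r) a with h | h
    · omega
    · -- a ≤ 2r; combined with hbot : s ≤ a-r+1 and r < s we get a = 2r, s = r+1
      exfalso
      have ha2 : a = 2 * r := by omega
      have hs2 : s = r + 1 := by omega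
      have hSfull : S = Finset.Icc (r + 1) (2 * r) := by
        apply Finset.Subset.antisymm
        · intro x hx
          rw [Finset.mem_Icc]
          have := hxs x hx
          have := hxa x hx
          omega
        · intro x hx
          rw [Finset.mem_Icc] at hx
          exact hblock x (by omega) (by omega)
      exact hnex ⟨r, hr1, Or.inr hSfull⟩
  -- step 2 : the image
  set T := ((S \ Finset.Icc (a - r + 1) a) ∪ Finset.Icc (a - r) (a - 1)) ∪ {r} with hTT
  have hfrk : frk S = T := by
    rw [frk, dif_pos hne, haa, hss, hrr, if_neg (by omega)]
  have hsub : Finset.Icc (a - r + 1) a ⊆ S := by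
    intro x hx
    rw [Finset.mem_Icc] at hx
    exact hblock x hx.1 hx.2
  have memT : ∀ x, x ∈ T ↔
      ((x ∈ S ∧ ¬(a - r + 1 ≤ x ∧ x ≤ a)) ∨ (a - r ≤ x ∧ x ≤ a - 1) ∨ x = r) := by
    intro x
    rw [hTT]
    simp only [Finset.mem_union, Finset.mem_sdiff, Finset.mem_singleton, Finset.mem_Icc]
    tauto
  have hSlow : ∀ x ∈ S, ¬(a - r + 1 ≤ x ∧ x ≤ a) → x ≤ a - r - 1 := by
    intro x hx hnx
    have h1 := hxa x hx
    have h2 : x ≠ a - r := fun hc => hgap (hc ▸ hx)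
    omega
  have hT1 : ∀ x ∈ T, x ≤ a - 1 := by
    intro x hx
    rcases (memT x).mp hx with ⟨h1, h2⟩ | ⟨h1, h2⟩ | rfl
    · have := hSlow x h1 h2
      omega
    · exact h2
    · omega
  have hT2 : ∀ x ∈ T, r ≤ x := by
    intro x hx
    rcases (memT x).mp hx with ⟨h1, _⟩ | ⟨h1, _⟩ | rfl
    · have := hxs x h1
      omega
    · omega
    · exact le_rfl
  have hrT : r ∈ T := (memT r).mpr (Or.inr (Or.inr rfl))
  have haT : a - 1 ∈ T := (memT _).mpr (Or.inr (Or.inl ⟨by omega, le_rfl⟩))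
  have hTne : T.Nonempty := ⟨r, hrT⟩
  have hmaxT : T.max' hTne = a - 1 :=
    le_antisymm (Finset.max'_le _ _ _ hT1) (Finset.le_max' _ _ haT)
  have hminT : T.min' hTne = r :=
    le_antisymm (Finset.min'_le _ _ hrT) (Finset.le_min' _ _ _ hT2)
  -- step 5 : T ∈ DP m
  have hdisj1 : Disjoint (S \ Finset.Icc (a - r + 1) a) (Finset.Icc (a - r) (a - 1)) := by
    rw [Finset.disjoint_left]
    intro x hx hx2
    rw [Finset.mem_sdiff] at hx
    rw [Finset.mem_Icc] at hx2
    have h9 := hSlow x hx.1 (fun hc => hx.2 (Finset.mem_Icc.mpr hc))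
    omega
  have hdisj2 : Disjoint ((S \ Finset.Icc (a - r + 1) a) ∪ Finset.Icc (a - r) (a - 1)) ({r} : Finset ℕ) := by
    rw [Finset.disjoint_right]
    intro x hx hx2
    rw [Finset.mem_singleton] at hx
    subst hx
    rw [Finset.mem_union, Finset.mem_sdiff] at hx2
    rcases hx2 with ⟨h1, _⟩ | h1
    · have := hxs x h1
      omega
    · rw [Finset.mem_Icc] at h1
      omega
  have hsumB : (∑ x ∈ Finset.Icc (a - r + 1) a, x) + (∑ x ∈ S \ Finset.Icc (a - r + 1) a, x)
      = ∑ x ∈ S, x := by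
    rw [add_comm]
    exact Finset.sum_sdiff hsub
  have hsum2 : (∑ x ∈ Finset.Icc (a - r + 1) a, x)
      = (∑ x ∈ Finset.Icc (a - r) (a - 1), x) + r := by
    have h := sum_Icc_shift (a - r) (a - 1)
    have he1 : a - r + 1 = a - r + 1 := rfl
    have he2 : a - 1 + 1 = a := by omega
    rw [he2] at h
    rw [h, Nat.card_Icc]
    congr 1
    omega
  have hsumT : ∑ x ∈ T, x = m := by
    rw [hTT, Finset.sum_union hdisj2, Finset.sum_union hdisj1, Finset.sum_singleton]
    have : S.sum (fun x => x) = ∑ x ∈ S, x := rfl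
    omega
  have hTDP : T ∈ DP m := by
    rw [mem_DP]
    refine ⟨fun hc => ?_, hsumT⟩
    have := hT2 0 hc
    omega
  -- step 6 : cards
  have hcardB : (Finset.Icc (a - r + 1) a).card = r := by
    rw [Nat.card_Icc]; omega
  have hcard2 : (Finset.Icc (a - r) (a - 1)).card = r := by
    rw [Nat.card_Icc]; omega
  have hcardT : S.card + 1 = T.card := by
    rw [hTT, Finset.card_union_of_disjoint hdisj2, Finset.card_union_of_disjoint hdisj1,
      Finset.card_singleton, hcard2]
    have h1 : (S \ Finset.Icc (a - r + 1) a).card + (Finset.Icc (a - r + 1) a).card = S.card :=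
      Finset.card_sdiff_add_card_eq_card hsub
    omega
  -- step 7 : staircase length of T is at least r
  have hrT2 : r ≤ stairLen T (a - 1) := by
    rw [stairLen, Nat.le_find_iff]
    intro i hi
    unfold stairP
    push_neg
    constructor
    · rw [memT]
      right; left
      omega
    · omega
  -- step 8 : T is not exceptional
  have hnexT : ¬ Exc T := by
    rintro ⟨k, hk1, hk2 | hk2⟩
    · have hkT : k ∈ T := by
        rw [hk2, Finset.mem_Icc]; omega
      have hkT2 : 2 * k - 1 ∈ T := by
        rw [hk2, Finset.mem_Icc]; omega
      have h1 := hT2 k hkT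
      have h2 := hT1 (2 * k - 1) hkT2
      have h3 : r ∈ Finset.Icc k (2 * k - 1) := hk2 ▸ hrT
      have h4 : a - 1 ∈ Finset.Icc k (2 * k - 1) := hk2 ▸ haT
      rw [Finset.mem_Icc] at h3 h4
      omega
    · have hkT : k + 1 ∈ T := by
        rw [hk2, Finset.mem_Icc]; omega
      have hkT2 : 2 * k ∈ T := by
        rw [hk2, Finset.mem_Icc]; omega
      have h1 := hT2 (k + 1) hkT
      have h2 := hT1 (2 * k) hkT2
      have h3 : r ∈ Finset.Icc (k + 1) (2 * k) := hk2 ▸ hrT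
      have h4 : a - 1 ∈ Finset.Icc (k + 1) (2 * k) := hk2 ▸ haT
      rw [Finset.mem_Icc] at h3 h4
      omega
  -- step 9 : frk T = S
  have hfrkT : frk T = S := by
    rw [frk, dif_pos hTne]
    rw [if_pos (by rw [hmaxT, hminT]; exact hrT2)]
    rw [hmaxT, hminT]
    have he1 : a - 1 - r + 1 = a - r := by omega
    have he2 : a - 1 - r + 2 = a - r + 1 := by omega
    have he3 : a - 1 + 1 = a := by omega
    rw [he1, he2, he3]
    ext x
    simp only [Finset.mem_union, Finset.mem_sdiff, Finset.mem_erase, Finset.mem_Icc, memT x]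
    constructor
    · rintro (⟨⟨hxr, hA | hB | rfl⟩, hx2⟩ | hx)
      · exact hA.1
      · omega
      · omega
      · exact hblock x hx.1 hx.2
    · intro hxS
      by_cases hx2 : a - r + 1 ≤ x
      · exact Or.inr ⟨hx2, hxa x hxS⟩
      · have hlow := hSlow x hxS (by omega)
        have hxsx := hxs x hxS
        exact Or.inl ⟨⟨by omega, Or.inl ⟨hxS, by omega⟩⟩, by omega⟩
  rw [hfrk]
  exact ⟨hTDP, hnexT, hfrkT, hcardT⟩


noncomputable instance : DecidablePred Exc := fun _ => Classical.dec _

lemma twice_sum_Icc (u v : ℕ) (h : u ≤ v + 1) :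
    2 * (∑ x ∈ Finset.Icc u v, x) + u * (u - 1) = (v + 1) * v := by
  have hgauss1 := Finset.sum_range_id_mul_two (v + 1)
  have hgauss2 := Finset.sum_range_id_mul_two u
  have hsplit : (∑ i ∈ Finset.Ico 0 u, i) + (∑ i ∈ Finset.Ico u (v + 1), i)
      = ∑ i ∈ Finset.Ico 0 (v + 1), i :=
    Finset.sum_Ico_consecutive _ (Nat.zero_le u) h
  rw [Finset.Ico_add_one_right_eq_Icc] at hsplit
  rw [← Finset.range_eq_Ico, ← Finset.range_eq_Ico] at hsplit
  simp only [Nat.add_sub_cancel] at hgauss1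
  omega

lemma pb_eq_exc (m : ℕ) (hm : 1 ≤ m) :
    pb m = ∑ S ∈ (DP m).filter (fun S => Exc S), (-1 : ℤ) ^ S.card := by
  classical
  rw [pb, ← Finset.sum_filter_add_sum_filter_not (DP m) (fun S => Exc S)]
  have h0 : ∑ S ∈ (DP m).filter (fun S => ¬ Exc S), (-1 : ℤ) ^ S.card = 0 := by
    apply Finset.sum_involution (g := fun S _ => frk S)
    · intro S hS
      rw [Finset.mem_filter] at hS
      have hne := DP_nonempty hm hS.1
      rcases le_or_gt (S.min' hne) (stairLen S (S.max' hne)) with h | h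
      · obtain ⟨_, _, _, hcard⟩ := caseA hm hS.1 hne h hS.2
        rw [← hcard, pow_succ]
        ring
      · obtain ⟨_, _, _, hcard⟩ := caseB hm hS.1 hne h hS.2
        rw [← hcard, pow_succ]
        ring
    · intro S hS _
      rw [Finset.mem_filter] at hS
      have hne := DP_nonempty hm hS.1
      intro hcon
      have hcc := congrArg Finset.card hcon
      rcases le_or_gt (S.min' hne) (stairLen S (S.max' hne)) with h | h
      · have := (caseA hm hS.1 hne h hS.2).2.2.2
        omega
      · have := (caseB hm hS.1 hne h hS.2).2.2.2
        omega
    · intro S hS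
      rw [Finset.mem_filter] at hS ⊢
      have hne := DP_nonempty hm hS.1
      rcases le_or_gt (S.min' hne) (stairLen S (S.max' hne)) with h | h
      · obtain ⟨h1, h2, _, _⟩ := caseA hm hS.1 hne h hS.2
        exact ⟨h1, h2⟩
      · obtain ⟨h1, h2, _, _⟩ := caseB hm hS.1 hne h hS.2
        exact ⟨h1, h2⟩
    · intro S hS
      rw [Finset.mem_filter] at hS
      have hne := DP_nonempty hm hS.1
      rcases le_or_gt (S.min' hne) (stairLen S (S.max' hne)) with h | h
      · exact (caseA hm hS.1 hne h hS.2).2.2.1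
      · exact (caseB hm hS.1 hne h hS.2).2.2.1
  rw [h0]
  ring

lemma stair1_mem_DP {m k : ℕ} (hk : 1 ≤ k) (h2 : 2 * m = k * (3 * k - 1)) :
    Finset.Icc k (2 * k - 1) ∈ DP m := by
  rw [mem_DP]
  refine ⟨by rw [Finset.mem_Icc]; omega, ?_⟩
  have ht := twice_sum_Icc k (2 * k - 1) (by omega)
  have e1 : 2 * k - 1 + 1 = 2 * k := by omega
  rw [e1] at ht
  have e2 : k * (k - 1) + k = k * k := by
    cases k with
    | zero => simp
    | succ n => simp only [Nat.add_sub_cancel]; ring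
  have e3 : 2 * k * (2 * k - 1) + 2 * k = 4 * (k * k) := by
    cases k with
    | zero => simp
    | succ n =>
      have : 2 * (n + 1) - 1 = 2 * n + 1 := by omega
      rw [this]; ring
  have e4 : k * (3 * k - 1) + k = 3 * (k * k) := by
    cases k with
    | zero => simp
    | succ n =>
      have : 3 * (n + 1) - 1 = 3 * n + 2 := by omega
      rw [this]; ring
  have hsm : (Finset.Icc k (2 * k - 1)).sum (fun x => x) = ∑ x ∈ Finset.Icc k (2 * k - 1), x := rfl
  omega

lemma stair2_mem_DP {m k : ℕ} (hk : 1 ≤ k) (h2 : 2 * m = k * (3 * k + 1)) :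
    Finset.Icc (k + 1) (2 * k) ∈ DP m := by
  rw [mem_DP]
  refine ⟨by rw [Finset.mem_Icc]; omega, ?_⟩
  have ht := twice_sum_Icc (k + 1) (2 * k) (by omega)
  have e2 : (k + 1) * (k + 1 - 1) = k * k + k := by
    simp only [Nat.add_sub_cancel]; ring
  have e3 : (2 * k + 1) * (2 * k) = 4 * (k * k) + 2 * k := by ring
  have e4 : k * (3 * k + 1) = 3 * (k * k) + k := by ring
  have hsm : (Finset.Icc (k + 1) (2 * k)).sum (fun x => x) = ∑ x ∈ Finset.Icc (k + 1) (2 * k), x := rfl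
  omega

lemma exc_char {m : ℕ} {S : Finset ℕ} (hS : S ∈ DP m) (hE : Exc S) :
    ∃ k : ℕ, 1 ≤ k ∧ ((S = Finset.Icc k (2 * k - 1) ∧ 2 * m = k * (3 * k - 1)) ∨
      (S = Finset.Icc (k + 1) (2 * k) ∧ 2 * m = k * (3 * k + 1))) := by
  obtain ⟨k, hk1, h | h⟩ := hE
  · refine ⟨k, hk1, Or.inl ⟨h, ?_⟩⟩
    have hsum := (mem_DP.mp hS).2
    rw [h] at hsum
    have ht := twice_sum_Icc k (2 * k - 1) (by omega)
    have e1 : 2 * k - 1 + 1 = 2 * k := by omega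
    rw [e1] at ht
    have e2 : k * (k - 1) + k = k * k := by
      cases k with
      | zero => simp
      | succ n => simp only [Nat.add_sub_cancel]; ring
    have e3 : 2 * k * (2 * k - 1) + 2 * k = 4 * (k * k) := by
      cases k with
      | zero => simp
      | succ n =>
        have : 2 * (n + 1) - 1 = 2 * n + 1 := by omega
        rw [this]; ring
    have e4 : k * (3 * k - 1) + k = 3 * (k * k) := by
      cases k with
      | zero => simp
      | succ n =>
        have : 3 * (n + 1) - 1 = 3 * n + 2 := by omega
        rw [this]; ring
    have hsm : (Finset.Icc k (2 * k - 1)).sum (fun x => x) = ∑ x ∈ Finset.Icc k (2 * k - 1), x := rfl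
    omega
  · refine ⟨k, hk1, Or.inr ⟨h, ?_⟩⟩
    have hsum := (mem_DP.mp hS).2
    rw [h] at hsum
    have ht := twice_sum_Icc (k + 1) (2 * k) (by omega)
    have e2 : (k + 1) * (k + 1 - 1) = k * k + k := by
      simp only [Nat.add_sub_cancel]; ring
    have e3 : (2 * k + 1) * (2 * k) = 4 * (k * k) + 2 * k := by ring
    have e4 : k * (3 * k + 1) = 3 * (k * k) + k := by ring
    have hsm : (Finset.Icc (k + 1) (2 * k)).sum (fun x => x) = ∑ x ∈ Finset.Icc (k + 1) (2 * k), x := rfl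
    omega

/-- staircase sums determine the parameter : type 1 vs type 1 -/
lemma stair_inj11 {j k : ℕ} (hj : 1 ≤ j) (hk : 1 ≤ k) (h : j * (3 * j - 1) = k * (3 * k - 1)) :
    j = k := by
  have hz : (j : ℤ) * (3 * j - 1) = (k : ℤ) * (3 * k - 1) := by
    have hj' : ((j * (3 * j - 1) : ℕ) : ℤ) = (j : ℤ) * (3 * j - 1) := by
      push_cast [Nat.cast_sub (show 1 ≤ 3 * j by omega)]
      ring
    have hk' : ((k * (3 * k - 1) : ℕ) : ℤ) = (k : ℤ) * (3 * k - 1) := by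
      push_cast [Nat.cast_sub (show 1 ≤ 3 * k by omega)]
      ring
    rw [← hj', ← hk', h]
  have h3 : ((j : ℤ) - k) * (3 * ((j : ℤ) + k) - 1) = 0 := by nlinarith [hz]
  rcases mul_eq_zero.mp h3 with h' | h'
  · omega
  · omega

lemma stair_inj22 {j k : ℕ} (h : j * (3 * j + 1) = k * (3 * k + 1)) : j = k := by
  have hz : (j : ℤ) * (3 * j + 1) = (k : ℤ) * (3 * k + 1) := by exact_mod_cast h
  have h3 : ((j : ℤ) - k) * (3 * ((j : ℤ) + k) + 1) = 0 := by nlinarith [hz]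
  rcases mul_eq_zero.mp h3 with h' | h'
  · omega
  · omega

lemma stair_inj12 {j k : ℕ} (hj : 1 ≤ j) (hk : 1 ≤ k)
    (h : j * (3 * j - 1) = k * (3 * k + 1)) : False := by
  have hz : (j : ℤ) * (3 * j - 1) = (k : ℤ) * (3 * k + 1) := by
    have hj' : ((j * (3 * j - 1) : ℕ) : ℤ) = (j : ℤ) * (3 * j - 1) := by
      push_cast [Nat.cast_sub (show 1 ≤ 3 * j by omega)]
      ring
    rw [← hj', h]
    push_cast
    ring
  have h3 : ((j : ℤ) + k) * (3 * ((j : ℤ) - k) - 1) = 0 := by nlinarith [hz]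
  rcases mul_eq_zero.mp h3 with h' | h'
  · omega
  · omega

lemma pb_pent1 {m k : ℕ} (hk : 1 ≤ k) (h2 : 2 * m = k * (3 * k - 1)) : pb m = (-1) ^ k := by
  have hm : 1 ≤ m := by
    rcases Nat.eq_zero_or_pos m with h | h
    · exfalso
      rw [h] at h2
      have : k * (3 * k - 1) ≥ 1 * (3 * 1 - 1) := Nat.mul_le_mul hk (by omega)
      omega
    · exact h
  rw [pb_eq_exc m hm]
  have hsingle : (DP m).filter (fun S => Exc S) = {Finset.Icc k (2 * k - 1)} := by
    apply Finset.eq_singleton_iff_unique_mem.mpr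
    constructor
    · rw [Finset.mem_filter]
      exact ⟨stair1_mem_DP hk h2, ⟨k, hk, Or.inl rfl⟩⟩
    · intro S hS
      rw [Finset.mem_filter] at hS
      obtain ⟨j, hj1, ⟨hSe, hje⟩ | ⟨hSe, hje⟩⟩ := exc_char hS.1 hS.2
      · have : j = k := stair_inj11 hj1 hk (by omega)
        rw [hSe, this]
      · exact absurd (by omega : k * (3 * k - 1) = j * (3 * j + 1)) (fun hc => stair_inj12 hk hj1 hc)
  rw [hsingle, Finset.sum_singleton, Nat.card_Icc]
  congr 1
  omega

lemma pb_pent2 {m k : ℕ} (hk : 1 ≤ k) (h2 : 2 * m = k * (3 * k + 1)) : pb m = (-1) ^ k := by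
  have hm : 1 ≤ m := by
    have : k * (3 * k + 1) ≥ 1 * (3 * 1 + 1) := Nat.mul_le_mul hk (by omega)
    omega
  rw [pb_eq_exc m hm]
  have hsingle : (DP m).filter (fun S => Exc S) = {Finset.Icc (k + 1) (2 * k)} := by
    apply Finset.eq_singleton_iff_unique_mem.mpr
    constructor
    · rw [Finset.mem_filter]
      exact ⟨stair2_mem_DP hk h2, ⟨k, hk, Or.inr rfl⟩⟩
    · intro S hS
      rw [Finset.mem_filter] at hS
      obtain ⟨j, hj1, ⟨hSe, hje⟩ | ⟨hSe, hje⟩⟩ := exc_char hS.1 hS.2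
      · exact absurd (by omega : j * (3 * j - 1) = k * (3 * k + 1)) (fun hc => stair_inj12 hj1 hk hc)
      · have : j = k := stair_inj22 (by omega)
        rw [hSe, this]
  rw [hsingle, Finset.sum_singleton, Nat.card_Icc]
  congr 1
  omega

lemma franklin1 (n : ℤ) : pb ((n * (3 * n - 1) / 2).toNat) = (-1) ^ n.natAbs := by
  rcases lt_trichotomy n 0 with hn | hn | hn
  · obtain ⟨k, hk⟩ := Int.eq_ofNat_of_zero_le (by omega : (0:ℤ) ≤ -n)
    have hk1 : 1 ≤ k := by omega
    have hne : n = -(k : ℤ) := by omega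
    subst hne
    have hz := pent_two_mul (-(k : ℤ))
    have hnn := pent_nonneg (-(k : ℤ))
    have hcast : (((k * (3 * k + 1) : ℕ)) : ℤ) = (-(k:ℤ)) * (3 * (-(k:ℤ)) - 1) := by
      push_cast
      ring
    have h2 : 2 * ((-(k:ℤ)) * (3 * (-(k:ℤ)) - 1) / 2).toNat = k * (3 * k + 1) := by
      omega
    rw [pb_pent2 hk1 h2]
    have habs : (-(k:ℤ)).natAbs = k := by omega
    rw [habs]
  · subst hn
    norm_num
    decide
  · obtain ⟨k, hk⟩ := Int.eq_ofNat_of_zero_le hn.le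
    have hk1 : 1 ≤ k := by omega
    subst hk
    have hz := pent_two_mul (k : ℤ)
    have hnn := pent_nonneg (k : ℤ)
    have hcast : (((k * (3 * k - 1) : ℕ)) : ℤ) = (k : ℤ) * (3 * (k : ℤ) - 1) := by
      push_cast [Nat.cast_sub (show 1 ≤ 3 * k by omega)]
      ring
    have h2 : 2 * ((k : ℤ) * (3 * (k : ℤ) - 1) / 2).toNat = k * (3 * k - 1) := by
      omega
    rw [pb_pent1 hk1 h2]
    have habs : ((k : ℤ)).natAbs = k := by omega
    rw [habs]

lemma franklin2 (m : ℕ) (h : ∀ n : ℤ, n * (3 * n - 1) / 2 ≠ (m : ℤ)) : pb m = 0 := by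
  have hm : 1 ≤ m := by
    rcases Nat.eq_zero_or_pos m with h0 | h0
    · exfalso
      apply h 0
      rw [h0]
      norm_num
    · exact h0
  rw [pb_eq_exc m hm]
  rw [Finset.filter_eq_empty_iff.mpr, Finset.sum_empty]
  intro S hS hE
  obtain ⟨k, hk1, ⟨_, hje⟩ | ⟨_, hje⟩⟩ := exc_char hS hE
  · apply h (k : ℤ)
    have hz := pent_two_mul (k : ℤ)
    have hcast : (((k * (3 * k - 1) : ℕ)) : ℤ) = (k : ℤ) * (3 * (k : ℤ) - 1) := by
      push_cast [Nat.cast_sub (show 1 ≤ 3 * k by omega)]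
      ring
    omega
  · apply h (-(k : ℤ))
    have hz := pent_two_mul (-(k : ℤ))
    have hcast : (((k * (3 * k + 1) : ℕ)) : ℤ) = (-(k : ℤ)) * (3 * (-(k : ℤ)) - 1) := by
      push_cast
      ring
    omega

lemma pb_le_one (m : ℕ) : |pb m| ≤ 1 := by
  by_cases h : ∃ n : ℤ, n * (3 * n - 1) / 2 = (m : ℤ)
  · obtain ⟨n, hn⟩ := h
    have h1 := franklin1 n
    have h3 : (n * (3 * n - 1) / 2).toNat = m := by
      have := pent_nonneg n
      omega
    rw [h3] at h1
    rw [h1, abs_pow, abs_neg, abs_one, one_pow]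
  · push_neg at h
    rw [franklin2 m h]
    norm_num

lemma neg_one_zpow_eq (n : ℤ) : (-1 : ℂ) ^ n = ((-1 : ℤ) ^ n.natAbs : ℤ) := by
  rcases n with k | k
  · simp
  · rw [zpow_negSucc]
    have h1 : ((-1 : ℂ) ^ (k + 1))⁻¹ = (-1 : ℂ) ^ (k + 1) := by
      rcases Nat.even_or_odd (k + 1) with h | h
      · rw [h.neg_one_pow]; norm_num
      · rw [h.neg_one_pow]; norm_num
    rw [h1]
    rw [Int.natAbs_negSucc]
    push_cast
    rfl

lemma neg_one_zpow_ne_zero (n : ℤ) : (-1 : ℂ) ^ n ≠ 0 :=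
  zpow_ne_zero n (by norm_num)

lemma sigma_le_sq (n : ℕ) : σ 1 n ≤ n * n := by
  rw [sigma_apply]
  calc ∑ d ∈ n.divisors, d ^ 1 ≤ ∑ d ∈ Finset.Icc 1 n, d ^ 1 := by
        apply Finset.sum_le_sum_of_subset
        intro d hd
        rw [Finset.mem_Icc]
        exact ⟨(Nat.one_le_iff_ne_zero.mpr (Nat.pos_of_mem_divisors hd).ne'), Nat.divisor_le hd⟩
  _ ≤ ∑ _d ∈ Finset.Icc 1 n, n := by
        apply Finset.sum_le_sum
        intro d hd
        rw [pow_one]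
        exact (Finset.mem_Icc.mp hd).2
  _ = (Finset.Icc 1 n).card * n := by rw [Finset.sum_const, smul_eq_mul]
  _ ≤ n * n := by
        apply Nat.mul_le_mul_right
        rw [Nat.card_Icc]
        omega

set_option maxHeartbeats 1000000 in
/-- Euler's identity behind his divisor recurrence: for `‖x‖ < 1`, the divisor
generating function times the pentagonal series equals the negated
term-by-term `x d/dx` derivative of the pentagonal series. -/
theorem euler_sigma_pentagonal_identity (x : ℂ) (hx : ‖x‖ < 1) :
    (∑' n : ℕ, (σ 1 (n + 1) : ℂ) * x ^ (n + 1)) *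
      (∑' n : ℤ, (-1 : ℂ) ^ n * x ^ (n * (3 * n - 1) / 2).toNat) =
    - ∑' n : ℤ, (-1 : ℂ) ^ n * ((n * (3 * n - 1) / 2 : ℤ) : ℂ) *
        x ^ (n * (3 * n - 1) / 2).toNat := by
  classical
  have hcast : ∀ n : ℤ, (((n * (3 * n - 1) / 2).toNat : ℕ) : ℂ) = ((n * (3 * n - 1) / 2 : ℤ) : ℂ) := by
    intro n
    have h := pent_nonneg n
    exact_mod_cast congrArg (fun z : ℤ => (z : ℂ)) (Int.toNat_of_nonneg h)
  -- reindex the pentagonal series over ℤ as power series over ℕ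
  have key1 : (∑' m : ℕ, (pb m : ℂ) * x ^ m)
      = ∑' n : ℤ, (-1 : ℂ) ^ n * x ^ (n * (3 * n - 1) / 2).toNat := by
    apply tsum_eq_tsum_of_ne_zero_bij
      (i := fun z => ((z.1 : ℤ) * (3 * z.1 - 1) / 2).toNat)
    · intro a b hab
      exact Subtype.ext (toNat_pent_inj hab)
    · intro m hm
      simp only [Function.mem_support] at hm
      have hpb : pb m ≠ 0 := by
        intro h0; rw [h0] at hm; simp at hm
      have hxm : x ^ m ≠ 0 := by
        intro h0; rw [h0] at hm; simp at hm
      have hex : ∃ n : ℤ, n * (3 * n - 1) / 2 = (m : ℤ) := by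
        by_contra hc
        push_neg at hc
        exact hpb (franklin2 m hc)
      obtain ⟨n, hn⟩ := hex
      have htn : (n * (3 * n - 1) / 2).toNat = m := by
        have := pent_nonneg n
        omega
      refine ⟨⟨n, ?_⟩, htn⟩
      simp only [Function.mem_support]
      rw [htn]
      exact mul_ne_zero (neg_one_zpow_ne_zero n) hxm
    · rintro ⟨n, hn⟩
      simp only
      rw [neg_one_zpow_eq n, franklin1 n]
  have key2 : (∑' m : ℕ, (pb m : ℂ) * m * x ^ m)
      = ∑' n : ℤ, (-1 : ℂ) ^ n * ((n * (3 * n - 1) / 2 : ℤ) : ℂ) *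
          x ^ (n * (3 * n - 1) / 2).toNat := by
    apply tsum_eq_tsum_of_ne_zero_bij
      (i := fun z => ((z.1 : ℤ) * (3 * z.1 - 1) / 2).toNat)
    · intro a b hab
      exact Subtype.ext (toNat_pent_inj hab)
    · intro m hm
      simp only [Function.mem_support] at hm
      have hpb : pb m ≠ 0 := by
        intro h0; rw [h0] at hm; simp at hm
      have hm0 : (m : ℂ) ≠ 0 := by
        intro h0; rw [h0] at hm; simp at hm
      have hxm : x ^ m ≠ 0 := by
        intro h0; rw [h0] at hm; simp at hm
      have hex : ∃ n : ℤ, n * (3 * n - 1) / 2 = (m : ℤ) := by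
        by_contra hc
        push_neg at hc
        exact hpb (franklin2 m hc)
      obtain ⟨n, hn⟩ := hex
      have htn : (n * (3 * n - 1) / 2).toNat = m := by
        have := pent_nonneg n
        omega
      refine ⟨⟨n, ?_⟩, htn⟩
      simp only [Function.mem_support]
      rw [htn]
      apply mul_ne_zero (mul_ne_zero (neg_one_zpow_ne_zero n) ?_) hxm
      rw [hn]
      exact hm0
    · rintro ⟨n, hn⟩
      simp only
      rw [neg_one_zpow_eq n, franklin1 n, ← hcast n]
  rw [← key1, ← key2]
  -- summability
  have hxnn : (0:ℝ) ≤ ‖x‖ := norm_nonneg x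
  have hA : Summable fun n : ℕ => ‖(σ 1 n : ℂ) * x ^ n‖ := by
    apply Summable.of_nonneg_of_le (f := fun n : ℕ => (n : ℝ) ^ 2 * ‖x‖ ^ n)
      (fun n => norm_nonneg _)
    · intro n
      rw [norm_mul, norm_pow]
      apply mul_le_mul_of_nonneg_right _ (pow_nonneg hxnn n)
      rw [Complex.norm_natCast]
      calc (σ 1 n : ℝ) ≤ ((n * n : ℕ) : ℝ) := by exact_mod_cast sigma_le_sq n
        _ = (n : ℝ) ^ 2 := by push_cast; ring
    · have : ‖(‖x‖)‖ < 1 := by rwa [Real.norm_of_nonneg hxnn]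
      exact summable_pow_mul_geometric_of_norm_lt_one 2 this
  have hB : Summable fun m : ℕ => ‖(pb m : ℂ) * x ^ m‖ := by
    apply Summable.of_nonneg_of_le (f := fun n : ℕ => ‖x‖ ^ n)
      (fun n => norm_nonneg _)
    · intro n
      rw [norm_mul, norm_pow]
      have h1 : ‖((pb n : ℤ) : ℂ)‖ ≤ 1 := by
        rw [Complex.norm_intCast]
        exact_mod_cast (by exact_mod_cast pb_le_one n : |(pb n : ℝ)| ≤ 1)
      exact mul_le_of_le_one_left (pow_nonneg hxnn n) h1
    · exact summable_geometric_of_lt_one hxnn hx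
  -- shift of the sigma series
  have hshift : (∑' n : ℕ, (σ 1 (n + 1) : ℂ) * x ^ (n + 1))
      = ∑' n : ℕ, (σ 1 n : ℂ) * x ^ n := by
    rw [Summable.tsum_eq_zero_add hA.of_norm]
    simp
  rw [hshift]
  rw [tsum_mul_tsum_eq_tsum_sum_antidiagonal_of_summable_norm hA hB]
  rw [← tsum_neg]
  apply tsum_congr
  intro n
  -- coefficient identity
  have hcoef : (∑ kl ∈ Finset.HasAntidiagonal.antidiagonal n, (σ 1 kl.1 : ℤ) * pb kl.2) = -(n * pb n) := by
    rcases Nat.eq_zero_or_pos n with h0 | h1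
    · subst h0
      simp [pb_zero]
    · rw [Finset.Nat.sum_antidiagonal_eq_sum_range_succ_mk]
      have hsplit : ∑ k ∈ Finset.range (n.succ), (σ 1 k : ℤ) * pb (n - k)
          = (σ 1 0 : ℤ) * pb (n - 0) + ∑ k ∈ Finset.Icc 1 n, (σ 1 k : ℤ) * pb (n - k) := by
        rw [Finset.range_eq_Ico, Finset.sum_eq_sum_Ico_succ_bot (by omega)]
        rw [Nat.succ_eq_add_one, Finset.Ico_add_one_right_eq_Icc]
      rw [hsplit]
      have hstep := stepA n h1
      simp only [ArithmeticFunction.map_zero, Int.natCast_zero, zero_mul, zero_add]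
      linarith [hstep]
  calc (∑ kl ∈ Finset.HasAntidiagonal.antidiagonal n, ((σ 1 kl.1 : ℂ) * x ^ kl.1) * ((pb kl.2 : ℂ) * x ^ kl.2))
      = ∑ kl ∈ Finset.HasAntidiagonal.antidiagonal n, ((σ 1 kl.1 : ℤ) * pb kl.2 : ℤ) * x ^ n := by
        apply Finset.sum_congr rfl
        intro kl hkl
        have : kl.1 + kl.2 = n := Finset.HasAntidiagonal.mem_antidiagonal.mp hkl
        rw [← this, pow_add]
        push_cast
        ring
    _ = ((∑ kl ∈ Finset.HasAntidiagonal.antidiagonal n, (σ 1 kl.1 : ℤ) * pb kl.2 : ℤ) : ℂ) * x ^ n := by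
        rw [← Finset.sum_mul]
        push_cast
        ring
    _ = -((pb n : ℂ) * n * x ^ n) := by
        rw [hcoef]
        push_cast
        ring
end

section
/- Let p(n) denote the number of partitions of n. For every complex number x with |x| < 1, the series ∑_{n=0}^∞ p(n) x^n converges and (∑_{n=0}^∞ p(n) x^n) · ∏_{m=1}^∞ (1 − x^m) = 1; equivalently ∑_{n=0}^∞ p(n) x^n = ∏_{m=1}^∞ 1/(1 − x^m) (Euler's generating function for the partition function). -/
/-!
Let `p_N(n)` count the partitions of `n` into parts at most `N`. Formally,
`∑ p_N(n) X^n = ∏_{i ≤ N} ∑_j X^{ij}`, a finite product. For `‖x‖ < 1` each factor converges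
absolutely to `(1 - x^i)⁻¹`, and absolute convergence survives Cauchy products, so
`∑ p_N(n) x^n = ∏_{i ≤ N} (1 - x^i)⁻¹`.

Since `p_N(n) = p(n)` for `n ≤ N`, the partial sums of `∑ p(n) r^n` (`0 ≤ r < 1`) are bounded by
the increasing partial products, hence by `∏_i (1 - r^i)⁻¹`; and since `p_N ≤ p`, dominated
convergence lets `N → ∞` in the finite identity.
-/

open Filter Finset PowerSeries Topology
open scoped PowerSeries.WithPiTopology

namespace PowerSeries

variable {R : Type*}

theorem coeff_tsum_X_pow_mul [Semiring R] [TopologicalSpace R] [T2Space R]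
    {k : ℕ} (hk : k ≠ 0) (n : ℕ) :
    coeff n (∑' j, (X : R⟦X⟧) ^ (k * j)) = if k ∣ n then 1 else 0 := by
  have hsum : Summable fun j ↦ (X : R⟦X⟧) ^ (k * j) := by
    simpa only [pow_mul] using
      WithPiTopology.summable_pow_of_constantCoeff_eq_zero (f := (X : R⟦X⟧) ^ k) (by simp [hk])
  refine ((WithPiTopology.hasSum_iff_hasSum_coeff R).mp hsum.hasSum n).unique ?_
  simp only [coeff_X_pow]
  split_ifs with hdvd
  · obtain ⟨m, rfl⟩ := hdvd
    convert hasSum_ite_eq m (1 : R) using 2 with j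
    simp [mul_right_inj' hk, eq_comm]
  · convert hasSum_zero with j
    exact if_neg fun h ↦ hdvd ⟨j, h⟩

def HasAbsSumAt [NormedRing R] (F : R⟦X⟧) (x a : R) : Prop :=
  Summable (fun n ↦ ‖coeff n F * x ^ n‖) ∧ HasSum (fun n ↦ coeff n F * x ^ n) a

section NormedCommRing

variable [NormedCommRing R] {F G : R⟦X⟧} {x a b : R}

theorem coeff_mul_mul_pow (F G : R⟦X⟧) (x : R) (n : ℕ) :
    coeff n (F * G) * x ^ n =
      ∑ kl ∈ antidiagonal n, coeff kl.1 F * x ^ kl.1 * (coeff kl.2 G * x ^ kl.2) := by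
  rw [coeff_mul, sum_mul]
  refine sum_congr rfl fun kl hkl ↦ ?_
  rw [← mem_antidiagonal.mp hkl, pow_add]
  ring

theorem HasAbsSumAt.mul (hF : HasAbsSumAt F x a) (hG : HasAbsSumAt G x b) :
    HasAbsSumAt (F * G) x (a * b) := by
  simp only [HasAbsSumAt, coeff_mul_mul_pow]
  refine ⟨summable_norm_sum_mul_antidiagonal_of_summable_norm (f := fun n ↦ coeff n F * x ^ n)
    (g := fun n ↦ coeff n G * x ^ n) hF.1 hG.1, ?_⟩
  rw [← hF.2.tsum_eq, ← hG.2.tsum_eq, tsum_mul_tsum_eq_tsum_sum_antidiagonal_of_summable_norm'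
    hF.1 hF.2.summable hG.1 hG.2.summable]
  exact (summable_sum_mul_antidiagonal_of_summable_norm' hF.1 hF.2.summable hG.1
    hG.2.summable).hasSum

theorem hasAbsSumAt_one (x : R) : HasAbsSumAt 1 x 1 := by
  have h : (fun n ↦ coeff n (1 : R⟦X⟧) * x ^ n) = fun n ↦ if n = 0 then 1 else 0 := by
    ext n
    split_ifs with hn <;> simp [hn]
  rw [HasAbsSumAt, h]
  exact ⟨summable_of_ne_finset_zero (s := {0}) (by simp_all), hasSum_ite_eq 0 1⟩

theorem hasAbsSumAt_prod {ι : Type*} (s : Finset ι) {F : ι → R⟦X⟧} {a : ι → R}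
    (h : ∀ i ∈ s, HasAbsSumAt (F i) x (a i)) :
    HasAbsSumAt (∏ i ∈ s, F i) x (∏ i ∈ s, a i) := by
  classical
  induction s using Finset.induction_on with
  | empty => simpa using hasAbsSumAt_one x
  | insert i s hi ih =>
    rw [prod_insert hi, prod_insert hi]
    exact (h i (mem_insert_self i s)).mul (ih fun j hj ↦ h j (mem_insert_of_mem hj))

end NormedCommRing

theorem hasAbsSumAt_mk_ite_dvd {𝕜 : Type*} [NormedDivisionRing 𝕜] {x : 𝕜} (hx : ‖x‖ < 1)
    {k : ℕ} (hk : k ≠ 0) :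
    HasAbsSumAt (mk fun n ↦ if k ∣ n then 1 else 0) x (1 - x ^ k)⁻¹ := by
  simp only [HasAbsSumAt, coeff_mk]
  refine ⟨.of_nonneg_of_le (fun _ ↦ norm_nonneg _) (fun n ↦ ?_)
    (summable_geometric_of_lt_one (norm_nonneg x) hx), ?_⟩
  · split_ifs <;> simp
  · rw [← (mul_right_injective₀ hk).hasSum_iff]
    · convert hasSum_geometric_of_norm_lt_one (ξ := x ^ k) (by
        simpa using pow_lt_one₀ (norm_nonneg x) hx hk) using 1
      ext m
      simp [pow_mul]
    · rintro n hn
      rw [if_neg fun ⟨m, hm⟩ ↦ hn ⟨m, hm.symm⟩, zero_mul]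

end PowerSeries

section EulerProduct

variable {𝕜 : Type*} [NormedField 𝕜] [CompleteSpace 𝕜] {x : 𝕜}

theorem multipliable_one_sub_pow_succ (hx : ‖x‖ < 1) :
    Multipliable fun i : ℕ ↦ 1 - x ^ (i + 1) := by
  simp_rw [sub_eq_add_neg]
  refine multipliable_one_add_of_summable ?_
  simpa [pow_succ] using (summable_geometric_of_lt_one (norm_nonneg x) hx).mul_right ‖x‖

theorem multipliable_one_sub_pow_succ_inv (hx : ‖x‖ < 1) :
    Multipliable fun i : ℕ ↦ (1 - x ^ (i + 1))⁻¹ := by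
  have hpow (i : ℕ) : ‖x ^ (i + 1)‖ ≤ ‖x‖ := by
    simpa using pow_le_of_le_one (norm_nonneg x) hx.le i.succ_ne_zero
  have hrepr (i : ℕ) : (1 - x ^ (i + 1))⁻¹ = 1 + x ^ (i + 1) * (1 - x ^ (i + 1))⁻¹ := by
    have := (isUnit_one_sub_of_norm_lt_one ((hpow i).trans_lt hx)).ne_zero
    field_simp
    ring
  refine (multipliable_one_add_of_summable
    (((summable_geometric_of_lt_one (norm_nonneg x) hx).mul_left (‖x‖ / (1 - ‖x‖))).of_nonneg_of_le
      (fun _ ↦ norm_nonneg _) fun i ↦ ?_)).congr fun i ↦ (hrepr i).symm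
  have hgap : 1 - ‖x‖ ≤ ‖1 - x ^ (i + 1)‖ := by
    have := norm_sub_norm_le (1 : 𝕜) (x ^ (i + 1))
    rw [norm_one] at this
    linarith [hpow i]
  rw [norm_mul, norm_inv, norm_pow, pow_succ, ← div_eq_mul_inv]
  calc ‖x‖ ^ i * ‖x‖ / ‖1 - x ^ (i + 1)‖ ≤ ‖x‖ ^ i * ‖x‖ / (1 - ‖x‖) :=
        div_le_div_of_nonneg_left (by positivity) (by linarith) hgap
    _ = ‖x‖ / (1 - ‖x‖) * ‖x‖ ^ i := by ring

theorem tprod_one_sub_pow_succ_inv_mul_tprod (hx : ‖x‖ < 1) :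
    (∏' i : ℕ, (1 - x ^ (i + 1))⁻¹) * ∏' i : ℕ, (1 - x ^ (i + 1)) = 1 := by
  have hunit (i : ℕ) : IsUnit (1 - x ^ (i + 1)) :=
    isUnit_one_sub_of_norm_lt_one (by simpa using pow_lt_one₀ (norm_nonneg x) hx i.succ_ne_zero)
  rw [← (multipliable_one_sub_pow_succ_inv hx).tprod_mul (multipliable_one_sub_pow_succ hx)]
  simp [(hunit _).inv_mul_cancel]

theorem monotone_prod_range_one_sub_pow_succ_inv {r : ℝ} (hr₀ : 0 ≤ r) (hr : r < 1) :
    Monotone fun N ↦ ∏ i ∈ range N, (1 - r ^ (i + 1))⁻¹ := by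
  have hfactor (i : ℕ) : 0 < 1 - r ^ (i + 1) ∧ 1 - r ^ (i + 1) ≤ 1 :=
    ⟨sub_pos.mpr (pow_lt_one₀ hr₀ hr i.succ_ne_zero), by linarith [pow_nonneg hr₀ (i + 1)]⟩
  refine monotone_nat_of_le_succ fun N ↦ ?_
  rw [prod_range_succ]
  exact le_mul_of_one_le_right (prod_nonneg fun i _ ↦ (inv_pos.mpr (hfactor i).1).le)
    ((one_le_inv₀ (hfactor N).1).mpr (hfactor N).2)

end EulerProduct

namespace Nat.Partition

theorem powerSeriesMk_card_restricted_le_eq_prod {R : Type*} [CommSemiring R] (N : ℕ) :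
    PowerSeries.mk (fun n ↦ (#(restricted n (· ≤ N)) : R)) =
      ∏ i ∈ range N, PowerSeries.mk fun n ↦ if i + 1 ∣ n then 1 else 0 := by
  let _ : TopologicalSpace R := ⊥
  have _ : DiscreteTopology R := ⟨rfl⟩
  rw [← (hasProd_powerSeriesMk_card_restricted R (· ≤ N)).tprod_eq,
    tprod_eq_prod (s := range N) fun i hi ↦ if_neg (by simpa using hi)]
  refine prod_congr rfl fun i hi ↦ ?_
  ext n
  rw [if_pos (by simpa [Nat.succ_le_iff] using hi), coeff_tsum_X_pow_mul i.succ_ne_zero, coeff_mk]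

theorem card_restricted_le_of_le {n N : ℕ} (h : n ≤ N) :
    #(restricted n (· ≤ N)) = Fintype.card n.Partition :=
  congrArg card <| filter_true_of_mem fun _ _ _ hi ↦ (le_of_mem_parts hi).trans h

theorem hasAbsSumAt_card_restricted_le {𝕜 : Type*} [NormedField 𝕜] {x : 𝕜} (hx : ‖x‖ < 1)
    (N : ℕ) :
    HasAbsSumAt (PowerSeries.mk fun n ↦ (#(restricted n (· ≤ N)) : 𝕜)) x
      (∏ i ∈ range N, (1 - x ^ (i + 1))⁻¹) := by
  rw [powerSeriesMk_card_restricted_le_eq_prod]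
  exact hasAbsSumAt_prod _ fun i _ ↦ hasAbsSumAt_mk_ite_dvd hx i.succ_ne_zero

theorem summable_card_mul_pow {r : ℝ} (hr₀ : 0 ≤ r) (hr : r < 1) :
    Summable fun n ↦ (Fintype.card n.Partition : ℝ) * r ^ n := by
  have hr' : ‖r‖ < 1 := by rwa [Real.norm_of_nonneg hr₀]
  refine summable_of_sum_range_le (c := ∏' i, (1 - r ^ (i + 1))⁻¹) (fun n ↦ by positivity)
    fun N ↦ ?_
  calc ∑ n ∈ range N, (Fintype.card n.Partition : ℝ) * r ^ n
      = ∑ n ∈ range N, (#(restricted n (· ≤ N)) : ℝ) * r ^ n :=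
        sum_congr rfl fun n hn ↦ by rw [card_restricted_le_of_le (mem_range.mp hn).le]
    _ ≤ ∏ i ∈ range N, (1 - r ^ (i + 1))⁻¹ := by
        simpa using sum_le_hasSum (range N) (fun n _ ↦ by rw [coeff_mk]; positivity)
          (hasAbsSumAt_card_restricted_le hr' N).2
    _ ≤ ∏' i, (1 - r ^ (i + 1))⁻¹ :=
        (monotone_prod_range_one_sub_pow_succ_inv hr₀ hr).ge_of_tendsto
          (multipliable_one_sub_pow_succ_inv hr').hasProd.tendsto_prod_nat N

theorem hasSum_card_mul_pow {𝕜 : Type*} [NormedField 𝕜] [CompleteSpace 𝕜]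
    {x : 𝕜} (hx : ‖x‖ < 1) :
    HasSum (fun n ↦ (Fintype.card n.Partition : 𝕜) * x ^ n) (∏' i, (1 - x ^ (i + 1))⁻¹) := by
  have hbound (N n : ℕ) : ‖(#(restricted n (· ≤ N)) : 𝕜) * x ^ n‖ ≤
      Fintype.card n.Partition * ‖x‖ ^ n := by
    rw [norm_mul, norm_pow]
    gcongr
    exact (Nat.norm_cast_le _).trans (by simpa using card_le_univ _)
  have hsummable := summable_card_mul_pow (norm_nonneg x) hx
  have hpartial : Tendsto (fun N ↦ ∑' n, (#(restricted n (· ≤ N)) : 𝕜) * x ^ n) atTop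
      (𝓝 (∑' n, (Fintype.card n.Partition : 𝕜) * x ^ n)) := by
    refine tendsto_tsum_of_dominated_convergence hsummable (fun n ↦ ?_) (.of_forall hbound)
    refine tendsto_atTop_of_eventually_const (i₀ := n) fun N hN ↦ ?_
    rw [card_restricted_le_of_le hN]
  have hvalue (N : ℕ) : ∑' n, (#(restricted n (· ≤ N)) : 𝕜) * x ^ n =
      ∏ i ∈ range N, (1 - x ^ (i + 1))⁻¹ := by
    simpa using (hasAbsSumAt_card_restricted_le hx N).2.tsum_eq
  simp only [hvalue] at hpartial
  rw [← tendsto_nhds_unique hpartial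
    (multipliable_one_sub_pow_succ_inv hx).hasProd.tendsto_prod_nat]
  exact (hsummable.of_norm_bounded fun n ↦ by
    simpa [card_restricted_le_of_le le_rfl] using hbound n n).hasSum

end Nat.Partition

/-- Euler's generating function for the partition function: for `‖x‖ < 1`,
`∑_{n=0}^∞ p(n) x^n` converges and `(∑ p(n) x^n) · ∏_{m=1}^∞ (1 - x^m) = 1`;
equivalently `∑_{n=0}^∞ p(n) x^n = ∏_{m=1}^∞ 1/(1 - x^m)`. -/
theorem euler_partition_generating_function (x : ℂ) (hx : ‖x‖ < 1) :
    Summable (fun n : ℕ => (Fintype.card (Nat.Partition n) : ℂ) * x ^ n) ∧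
    (∑' n : ℕ, (Fintype.card (Nat.Partition n) : ℂ) * x ^ n) *
        ∏' m : ℕ, (1 - x ^ (m + 1)) = 1 ∧
    ∑' n : ℕ, (Fintype.card (Nat.Partition n) : ℂ) * x ^ n =
      ∏' m : ℕ, (1 - x ^ (m + 1))⁻¹ := by
  have h := Nat.Partition.hasSum_card_mul_pow hx
  refine ⟨h.summable, ?_, h.tsum_eq⟩
  rw [h.tsum_eq]
  exact tprod_one_sub_pow_succ_inv_mul_tprod hx
end

section
/- In the sense of Abel summation: lim_{x → 1⁻, x real} ∑_{n=1}^∞ (−1)^n (n(3n−1)/2) x^n = 1/8 and lim_{x → 1⁻, x real} ∑_{n=1}^∞ (−1)^n (n(3n+1)/2) x^n = −1/8; in particular the two Abel sums add to 0 (Euler's evaluation s = 1/8, t = −1/8 of the divergent alternating series −1 + 5 − 12 + 22 − ⋯ and −2 + 7 − 15 + 26 − ⋯ of pentagonal numbers, which agrees with his Euler-summation evaluation). -/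
/-!
Writing `(n + 1) (a n + b) = 2a·C(n+2, 2) + (b - 2a)·C(n+1, 1)`, the power series
`∑ (n + 1) (a n + b) yⁿ⁺¹` sums to the rational function `y (2a/(1-y)³ + (b-2a)/(1-y)²)`
for `|y| < 1`. At `y = -x` this is continuous at `x = 1`, so the Abel sum of the
alternating series is its value there, `(a - b)/4`. The pentagonal numbers are the cases
`(a, b) = (3, 2)` and `(3, 4)`, halved.
-/

open Filter Topology

lemma hasSum_succ_mul_linear_mul_pow (a b : ℝ) {y : ℝ} (hy : ‖y‖ < 1) :
    HasSum (fun n : ℕ => (n + 1) * (a * n + b) * y ^ (n + 1))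
      (y * (2 * a / (1 - y) ^ 3 + (b - 2 * a) / (1 - y) ^ 2)) := by
  have h2 := (hasSum_choose_mul_geometric_of_norm_lt_one 2 hy).mul_left (2 * a)
  have h1 := (hasSum_choose_mul_geometric_of_norm_lt_one 1 hy).mul_left (b - 2 * a)
  have hcoeff (n : ℕ) : ((n : ℝ) + 1) * (a * n + b) * y ^ (n + 1) =
      y * (2 * a * ((n + 2).choose 2 * y ^ n) + (b - 2 * a) * ((n + 1).choose 1 * y ^ n)) := by
    rw [Nat.cast_choose_two, Nat.choose_one_right]
    push_cast
    ring
  simpa only [← hcoeff, one_div, ← div_eq_mul_inv] using (h2.add h1).mul_left y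

lemma tendsto_abel_sum_alternating_succ_mul_linear (a b : ℝ) :
    Tendsto (fun x : ℝ =>
        ∑' n : ℕ, (-1 : ℝ) ^ (n + 1) * ((n + 1) * (a * n + b) / 2) * x ^ (n + 1))
      (𝓝[<] 1) (𝓝 ((a - b) / 8)) := by
  set closedForm : ℝ → ℝ := fun x =>
    -x * (2 * a / (1 - -x) ^ 3 + (b - 2 * a) / (1 - -x) ^ 2) / 2
  have hclosed : Tendsto closedForm (𝓝[<] 1) (𝓝 ((a - b) / 8)) := by
    have : ContinuousAt closedForm 1 := by
      fun_prop (disch := norm_num)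
    convert this.tendsto.mono_left nhdsWithin_le_nhds using 2
    ring
  refine hclosed.congr' ?_
  filter_upwards [Ioo_mem_nhdsLT zero_lt_one] with x hx
  have hy : ‖-x‖ < 1 := by
    rw [norm_neg, Real.norm_of_nonneg hx.1.le]
    exact hx.2
  simp only [closedForm]
  rw [← ((hasSum_succ_mul_linear_mul_pow a b hy).div_const 2).tsum_eq]
  congr 1
  funext n
  rw [neg_pow]
  ring

lemma cast_succ_mul_three_mul_add_div_two (n k : ℕ) (hk : Even k) :
    (((n + 1) * (3 * n + k) / 2 : ℕ) : ℝ) = (n + 1) * (3 * n + k) / 2 := by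
  have : Even ((n + 1) * (3 * n + k)) := by
    rcases Nat.even_or_odd n with hn | hn <;> simp [Nat.even_add, parity_simps, hn, hk]
  rw [Nat.cast_div_charZero this.two_dvd]
  push_cast
  ring

/-- Euler's Abel-summation evaluation of the divergent alternating series of
pentagonal numbers: `-1 + 5 - 12 + 22 - ⋯ = 1/8` and `-2 + 7 - 15 + 26 - ⋯ = -1/8`. -/
theorem euler_abel_sum_pentagonal :
    Tendsto (fun x : ℝ => ∑' n : ℕ,
        (-1 : ℝ) ^ (n + 1) * (((n + 1) * (3 * n + 2) / 2 : ℕ) : ℝ) * x ^ (n + 1))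
      (nhdsWithin 1 (Set.Iio (1 : ℝ))) (nhds (1 / 8)) ∧
    Tendsto (fun x : ℝ => ∑' n : ℕ,
        (-1 : ℝ) ^ (n + 1) * (((n + 1) * (3 * n + 4) / 2 : ℕ) : ℝ) * x ^ (n + 1))
      (nhdsWithin 1 (Set.Iio (1 : ℝ))) (nhds (-(1 / 8))) := by
  simp only [cast_succ_mul_three_mul_add_div_two _ _ even_two,
    cast_succ_mul_three_mul_add_div_two _ 4 (by decide)]
  constructor
  · convert tendsto_abel_sum_alternating_succ_mul_linear 3 2 using 2 <;> norm_num
  · convert tendsto_abel_sum_alternating_succ_mul_linear 3 4 using 2 <;> norm_num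
end
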